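/- arXiv:2109.13161 — 5 statements merged into one kernel-verified Lean document; each statement's English description precedes it below -/
import Mathlib

section
/- Let σ, τ : ℂ² → ℂ be holomorphic (in variables x, y), let Ω₁, Ω₂, b₁ ∈ ℂ, set u = -2 ∂ₓ² log τ + b₁ and ψ = (σ/τ)·exp(Ω₁x + Ω₂y) on the open set where τ ≠ 0. Then (∂_y - ∂ₓ² + u)ψ = 0 holds on {τ ≠ 0} if and only if the bilinear (Hirota) equation σ_y τ - σ τ_y - (σ_{xx} τ - 2σ_x τ_x + σ τ_{xx}) - 2Ω₁(σ_x τ - σ τ_x) + (Ω₂ - Ω₁² + b₁) σ τ = 0 holds on ℂ². -/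
open Complex

/-- Partial derivative in the first (x) variable of a function on `ℂ × ℂ`. -/
noncomputable def dX (f : ℂ × ℂ → ℂ) : ℂ × ℂ → ℂ :=
  fun p => deriv (fun x => f (x, p.2)) p.1

/-- Partial derivative in the second (y) variable of a function on `ℂ × ℂ`. -/
noncomputable def dY (f : ℂ × ℂ → ℂ) : ℂ × ℂ → ℂ :=
  fun p => deriv (fun y => f (p.1, y)) p.2

section Aux

open Metric Set Filter

/-- The derivative of an entire function is entire. -/
lemma entire_deriv {g : ℂ → ℂ} (hg : Differentiable ℂ g) : Differentiable ℂ (deriv g) := by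
  have h1 : AnalyticOnNhd ℂ g Set.univ := analyticOnNhd_univ_iff_differentiable.mpr hg
  exact analyticOnNhd_univ_iff_differentiable.mp h1.deriv

lemma sliceX_diff {f : ℂ × ℂ → ℂ} (hf : Differentiable ℂ f) (b : ℂ) :
    Differentiable ℂ (fun x => f (x, b)) :=
  hf.comp (differentiable_id.prodMk (differentiable_const b))

lemma sliceY_diff {f : ℂ × ℂ → ℂ} (hf : Differentiable ℂ f) (a : ℂ) :
    Differentiable ℂ (fun y => f (a, y)) :=
  hf.comp ((differentiable_const a).prodMk differentiable_id)

/-- Cauchy estimate for the derivative of an entire function. -/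
lemma deriv_le_of_ball {h : ℂ → ℂ} (hh : Differentiable ℂ h) {C : ℝ} (x : ℂ)
    (hC : ∀ w ∈ closedBall x 1, ‖h w‖ ≤ C) : ‖deriv h x‖ ≤ C := by
  have := Complex.norm_deriv_le_of_forall_mem_sphere_norm_le one_pos hh.diffContOnCl
    (fun z hz => hC z (sphere_subset_closedBall hz))
  simpa using this

/-- Cauchy estimate for the second derivative of an entire function. -/
lemma deriv2_le_of_ball {h : ℂ → ℂ} (hh : Differentiable ℂ h) {C : ℝ} (x : ℂ)
    (hC : ∀ w ∈ closedBall x 2, ‖h w‖ ≤ C) : ‖deriv (deriv h) x‖ ≤ C := by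
  apply deriv_le_of_ball (entire_deriv hh) x
  intro w hw
  apply deriv_le_of_ball hh w
  intro v hv
  apply hC
  have : dist v x ≤ dist v w + dist w x := dist_triangle _ _ _
  simp only [mem_closedBall] at hv hw ⊢
  linarith

lemma dX_slice_eq (f : ℂ × ℂ → ℂ) (y : ℂ) :
    (fun x => dX f (x, y)) = deriv (fun x => f (x, y)) := rfl

/-- Joint continuity of the x-partial derivative of an entire function on `ℂ × ℂ`. -/
lemma cont_dX {f : ℂ × ℂ → ℂ} (hf : Differentiable ℂ f) : Continuous (dX f) := by
  rw [continuous_iff_continuousAt]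
  rintro ⟨a, b⟩
  rw [Metric.continuousAt_iff]
  intro ε hε
  have hK : IsCompact ((closedBall a 2) ×ˢ (closedBall b 1)) :=
    (isCompact_closedBall a 2).prod (isCompact_closedBall b 1)
  have hu := hK.uniformContinuousOn_of_continuous hf.continuous.continuousOn
  rw [Metric.uniformContinuousOn_iff] at hu
  obtain ⟨δ₁, hδ₁, Hδ₁⟩ := hu (ε / 4) (by positivity)
  have hgb : Continuous (deriv (fun x => f (x, b))) :=
    (entire_deriv (sliceX_diff hf b)).continuous
  have hc := hgb.continuousAt (x := a)
  rw [Metric.continuousAt_iff] at hc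
  obtain ⟨δ₂, hδ₂, Hδ₂⟩ := hc (ε / 4) (by positivity)
  refine ⟨min (min δ₁ δ₂) 1, by positivity, ?_⟩
  rintro ⟨x, y⟩ hxy
  rw [Prod.dist_eq, max_lt_iff] at hxy
  obtain ⟨hx', hy'⟩ := hxy
  have hxδ₁ : dist x a < δ₁ := lt_of_lt_of_le hx' ((min_le_left _ _).trans (min_le_left _ _))
  have hxδ₂ : dist x a < δ₂ := lt_of_lt_of_le hx' ((min_le_left _ _).trans (min_le_right _ _))
  have hx1 : dist x a < 1 := lt_of_lt_of_le hx' (min_le_right _ _)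
  have hyδ₁ : dist y b < δ₁ := lt_of_lt_of_le hy' ((min_le_left _ _).trans (min_le_left _ _))
  have hy1 : dist y b < 1 := lt_of_lt_of_le hy' (min_le_right _ _)
  have h2 : dist (dX f (x, b)) (dX f (a, b)) < ε / 4 := by
    have := Hδ₂ hxδ₂
    simpa [dX] using this
  have h1 : dist (dX f (x, y)) (dX f (x, b)) ≤ ε / 4 := by
    have hdiff : dX f (x, y) - dX f (x, b) =
        deriv (fun w => f (w, y) - f (w, b)) x := by
      rw [deriv_fun_sub ((sliceX_diff hf y) x) ((sliceX_diff hf b) x)]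
      rfl
    rw [dist_eq_norm, hdiff]
    apply deriv_le_of_ball ((sliceX_diff hf y).sub (sliceX_diff hf b)) x
    intro w hw
    simp only [mem_closedBall] at hw
    have hwa : w ∈ closedBall a 2 := by
      simp only [mem_closedBall]
      have := dist_triangle w x a
      linarith
    have hmem1 : (w, y) ∈ (closedBall a 2) ×ˢ (closedBall b 1) :=
      ⟨hwa, by simp only [mem_closedBall]; linarith⟩
    have hmem2 : (w, b) ∈ (closedBall a 2) ×ˢ (closedBall b 1) :=
      ⟨hwa, by simp [mem_closedBall]⟩
    have hd : dist ((w, y) : ℂ × ℂ) (w, b) < δ₁ := by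
      rw [Prod.dist_eq]
      simpa using hyδ₁
    have := Hδ₁ _ hmem1 _ hmem2 hd
    rw [dist_eq_norm] at this
    exact this.le
  calc dist (dX f (x, y)) (dX f (a, b))
      ≤ dist (dX f (x, y)) (dX f (x, b)) + dist (dX f (x, b)) (dX f (a, b)) :=
        dist_triangle _ _ _
    _ < ε := by linarith

/-- Joint continuity of the second x-partial derivative. -/
lemma cont_dXX {f : ℂ × ℂ → ℂ} (hf : Differentiable ℂ f) : Continuous (dX (dX f)) := by
  rw [continuous_iff_continuousAt]
  rintro ⟨a, b⟩
  rw [Metric.continuousAt_iff]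
  intro ε hε
  have hK : IsCompact ((closedBall a 3) ×ˢ (closedBall b 1)) :=
    (isCompact_closedBall a 3).prod (isCompact_closedBall b 1)
  have hu := hK.uniformContinuousOn_of_continuous hf.continuous.continuousOn
  rw [Metric.uniformContinuousOn_iff] at hu
  obtain ⟨δ₁, hδ₁, Hδ₁⟩ := hu (ε / 4) (by positivity)
  have hgb : Continuous (deriv (deriv (fun x => f (x, b)))) :=
    (entire_deriv (entire_deriv (sliceX_diff hf b))).continuous
  have hc := hgb.continuousAt (x := a)
  rw [Metric.continuousAt_iff] at hc
  obtain ⟨δ₂, hδ₂, Hδ₂⟩ := hc (ε / 4) (by positivity)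
  refine ⟨min (min δ₁ δ₂) 1, by positivity, ?_⟩
  rintro ⟨x, y⟩ hxy
  rw [Prod.dist_eq, max_lt_iff] at hxy
  obtain ⟨hx', hy'⟩ := hxy
  have hxδ₁ : dist x a < δ₁ := lt_of_lt_of_le hx' ((min_le_left _ _).trans (min_le_left _ _))
  have hxδ₂ : dist x a < δ₂ := lt_of_lt_of_le hx' ((min_le_left _ _).trans (min_le_right _ _))
  have hx1 : dist x a < 1 := lt_of_lt_of_le hx' (min_le_right _ _)
  have hyδ₁ : dist y b < δ₁ := lt_of_lt_of_le hy' ((min_le_left _ _).trans (min_le_left _ _))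
  have hy1 : dist y b < 1 := lt_of_lt_of_le hy' (min_le_right _ _)
  have key : ∀ z : ℂ, dX (dX f) (x, z) = deriv (deriv (fun w => f (w, z))) x := by
    intro z
    show deriv (fun w => dX f (w, z)) x = _
    rw [dX_slice_eq]
  have keya : dX (dX f) (a, b) = deriv (deriv (fun w => f (w, b))) a := by
    show deriv (fun w => dX f (w, b)) a = _
    rw [dX_slice_eq]
  have h2 : dist (dX (dX f) (x, b)) (dX (dX f) (a, b)) < ε / 4 := by
    rw [key b, keya]
    exact Hδ₂ hxδ₂
  have h1 : dist (dX (dX f) (x, y)) (dX (dX f) (x, b)) ≤ ε / 4 := by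
    have hy' : Differentiable ℂ fun w => f (w, y) := sliceX_diff hf y
    have hb' : Differentiable ℂ fun w => f (w, b) := sliceX_diff hf b
    have hdiff : dX (dX f) (x, y) - dX (dX f) (x, b) =
        deriv (deriv (fun w => f (w, y) - f (w, b))) x := by
      rw [key y, key b]
      have e1 : deriv (fun w => f (w, y) - f (w, b)) =
          fun w => deriv (fun w' => f (w', y)) w - deriv (fun w' => f (w', b)) w := by
        funext w
        exact deriv_sub (hy' w) (hb' w)
      rw [e1, deriv_fun_sub ((entire_deriv hy') x) ((entire_deriv hb') x)]
    rw [dist_eq_norm, hdiff]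
    apply deriv2_le_of_ball (hy'.sub hb') x
    intro w hw
    simp only [mem_closedBall] at hw
    have hwa : w ∈ closedBall a 3 := by
      simp only [mem_closedBall]
      have := dist_triangle w x a
      linarith
    have hmem1 : (w, y) ∈ (closedBall a 3) ×ˢ (closedBall b 1) :=
      ⟨hwa, by simp only [mem_closedBall]; linarith⟩
    have hmem2 : (w, b) ∈ (closedBall a 3) ×ˢ (closedBall b 1) :=
      ⟨hwa, by simp [mem_closedBall]⟩
    have hd : dist ((w, y) : ℂ × ℂ) (w, b) < δ₁ := by
      rw [Prod.dist_eq]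
      simpa using hyδ₁
    have := Hδ₁ _ hmem1 _ hmem2 hd
    rw [dist_eq_norm] at this
    exact this.le
  calc dist (dX (dX f) (x, y)) (dX (dX f) (a, b))
      ≤ dist (dX (dX f) (x, y)) (dX (dX f) (x, b))
        + dist (dX (dX f) (x, b)) (dX (dX f) (a, b)) := dist_triangle _ _ _
    _ < ε := by linarith

lemma dY_eq_swap (f : ℂ × ℂ → ℂ) :
    dY f = fun p => dX (fun q => f (q.2, q.1)) (p.2, p.1) := by
  funext p
  rfl

lemma cont_dY {f : ℂ × ℂ → ℂ} (hf : Differentiable ℂ f) : Continuous (dY f) := by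
  rw [dY_eq_swap]
  have h1 : Differentiable ℂ (fun q : ℂ × ℂ => f (q.2, q.1)) :=
    hf.comp (differentiable_snd.prodMk differentiable_fst)
  exact (cont_dX h1).comp (continuous_snd.prodMk continuous_fst)

/-- Identity theorem along lines: if an entire function on `ℂ × ℂ` is not identically
zero, then its nonvanishing set is dense. -/
lemma dense_ne_zero {τ : ℂ × ℂ → ℂ} (hτ : Differentiable ℂ τ) {q0 : ℂ × ℂ}
    (hq0 : τ q0 ≠ 0) : Dense {q : ℂ × ℂ | τ q ≠ 0} := by
  rw [dense_iff_inter_open]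
  rintro U hU ⟨p, hp⟩
  by_contra hc
  rw [Set.not_nonempty_iff_eq_empty, Set.eq_empty_iff_forall_notMem] at hc
  have hzero : ∀ x ∈ U, τ x = 0 := by
    intro x hx
    by_contra hne
    exact hc x ⟨hx, hne⟩
  set L : ℂ → ℂ × ℂ := fun z => p + z • (q0 - p) with hL_def
  have hL : Differentiable ℂ L :=
    (differentiable_const p).add (differentiable_id.smul_const (q0 - p))
  have hg : Differentiable ℂ (τ ∘ L) := hτ.comp hL
  have hL0 : L 0 = p := by simp [hL_def]
  have h0 : (τ ∘ L) =ᶠ[nhds 0] 0 := by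
    have hmem : ∀ᶠ z in nhds (0 : ℂ), L z ∈ U := by
      have : ContinuousAt L 0 := hL.continuous.continuousAt
      have := this.preimage_mem_nhds (by rw [hL0]; exact hU.mem_nhds hp)
      filter_upwards [this] with z hz using hz
    filter_upwards [hmem] with z hz
    exact hzero _ hz
  have hzero' := (analyticOnNhd_univ_iff_differentiable.mpr hg).eqOn_zero_of_preconnected_of_eventuallyEq_zero
    isPreconnected_univ (Set.mem_univ (0 : ℂ)) h0
  have h1 := hzero' (Set.mem_univ (1 : ℂ))
  apply hq0
  have hL1 : L 1 = q0 := by simp [hL_def]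
  simpa [hL1] using h1

/-- Explicit formula for the derivative of a quotient times an exponential factor. -/
lemma deriv_quot_mul {g h E : ℂ → ℂ} {c : ℂ} (hg : Differentiable ℂ g)
    (hh : Differentiable ℂ h) (hE : ∀ x, HasDerivAt E (E x * c) x) {b : ℂ}
    (hb : h b ≠ 0) :
    deriv (fun y => g y / h y * E y) b =
      (deriv g b * h b - g b * deriv h b) / h b ^ 2 * E b + g b / h b * (E b * c) :=
  (((hg b).hasDerivAt.div (hh b).hasDerivAt hb).mul (hE b)).deriv

/-- Explicit formula for the second x-derivative appearing in the PDE. -/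
lemma deriv2_formula {g h E : ℂ → ℂ} {c : ℂ} (hg : Differentiable ℂ g)
    (hh : Differentiable ℂ h) (hE : ∀ x, HasDerivAt E (E x * c) x) {a : ℂ}
    (ha : h a ≠ 0) :
    deriv (fun x => deriv (fun x' => g x' / h x' * E x') x) a =
      ((deriv (deriv g) a * h a + deriv g a * deriv h a -
          (deriv g a * deriv h a + g a * deriv (deriv h) a)) * h a ^ 2 -
        (deriv g a * h a - g a * deriv h a) * (2 * h a * deriv h a)) / (h a ^ 2) ^ 2 * E a
      + (deriv g a * h a - g a * deriv h a) / h a ^ 2 * (E a * c)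
      + ((deriv g a * h a - g a * deriv h a) / h a ^ 2 * (E a * c)
          + g a / h a * (E a * c * c)) := by
  have hg' := entire_deriv hg
  have hh' := entire_deriv hh
  have hev : (fun x => deriv (fun x' => g x' / h x' * E x') x) =ᶠ[nhds a]
      (fun x => (deriv g x * h x - g x * deriv h x) / h x ^ 2 * E x
        + g x / h x * (E x * c)) := by
    filter_upwards [hh.continuous.continuousAt.eventually_ne ha] with x hx
    exact (((hg x).hasDerivAt.div (hh x).hasDerivAt hx).mul (hE x)).deriv
  rw [hev.deriv_eq]
  have Hg1 := (hg a).hasDerivAt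
  have Hh1 := (hh a).hasDerivAt
  have Hg2 := (hg' a).hasDerivAt
  have Hh2 := (hh' a).hasDerivAt
  have Hpow : HasDerivAt (fun x => h x ^ 2) (2 * h a * deriv h a) a := by
    convert Hh1.fun_pow 2 using 1
    · rfl
    · rfl
    push_cast
    ring
  have HF := ((((Hg2.mul Hh1).sub (Hg1.mul Hh2)).div Hpow (pow_ne_zero 2 ha)).mul
    (hE a)).add ((Hg1.div Hh1 ha).mul ((hE a).mul_const c))
  exact HF.deriv

/-- Explicit formula for the derivative of `h'/h`. -/
lemma deriv_quot_formula {h : ℂ → ℂ} (hh : Differentiable ℂ h) {a : ℂ}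
    (ha : h a ≠ 0) :
    deriv (fun x => deriv h x / h x) a =
      (deriv (deriv h) a * h a - deriv h a * deriv h a) / h a ^ 2 :=
  (((entire_deriv hh a).hasDerivAt).div (hh a).hasDerivAt ha).deriv

end Aux

/-- For holomorphic `σ, τ : ℂ² → ℂ`, with
`u = -2 ∂ₓ² log τ + b₁` (written as `-2 ∂ₓ(τₓ/τ) + b₁`) and
`ψ = (σ/τ)·exp(Ω₁ x + Ω₂ y)`, the equation `(∂_y - ∂ₓ² + u)ψ = 0` holds on the
set `{τ ≠ 0}` if and only if the bilinear Hirota equation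
`σ_y τ - σ τ_y - (σ_{xx} τ - 2 σ_x τ_x + σ τ_{xx}) - 2Ω₁(σ_x τ - σ τ_x)
  + (Ω₂ - Ω₁² + b₁) σ τ = 0` holds on all of `ℂ²`. -/
theorem stmt1 (σ τ : ℂ × ℂ → ℂ) (hσ : Differentiable ℂ σ) (hτ : Differentiable ℂ τ)
    (Ω₁ Ω₂ b₁ : ℂ)
    (u : ℂ × ℂ → ℂ) (hu : ∀ p, u p = -2 * dX (fun q => dX τ q / τ q) p + b₁)
    (ψ : ℂ × ℂ → ℂ) (hψ : ∀ p, ψ p = σ p / τ p * Complex.exp (Ω₁ * p.1 + Ω₂ * p.2)) :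
    (∀ p : ℂ × ℂ, τ p ≠ 0 → dY ψ p - dX (dX ψ) p + u p * ψ p = 0) ↔
      (∀ p : ℂ × ℂ,
        dY σ p * τ p - σ p * dY τ p
          - (dX (dX σ) p * τ p - 2 * dX σ p * dX τ p + σ p * dX (dX τ) p)
          - 2 * Ω₁ * (dX σ p * τ p - σ p * dX τ p)
          + (Ω₂ - Ω₁ ^ 2 + b₁) * σ p * τ p = 0) := by
  set B : ℂ × ℂ → ℂ := fun p =>
    dY σ p * τ p - σ p * dY τ p
      - (dX (dX σ) p * τ p - 2 * dX σ p * dX τ p + σ p * dX (dX τ) p)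
      - 2 * Ω₁ * (dX σ p * τ p - σ p * dX τ p)
      + (Ω₂ - Ω₁ ^ 2 + b₁) * σ p * τ p with hB_def
  have key : ∀ p : ℂ × ℂ, τ p ≠ 0 →
      dY ψ p - dX (dX ψ) p + u p * ψ p =
        B p * Complex.exp (Ω₁ * p.1 + Ω₂ * p.2) / τ p ^ 2 := by
    rintro ⟨a, b⟩ hp
    have hp' : τ (a, b) ≠ 0 := hp
    have hEx : ∀ x : ℂ, HasDerivAt (fun x' => Complex.exp (Ω₁ * x' + Ω₂ * b))
        (Complex.exp (Ω₁ * x + Ω₂ * b) * Ω₁) x := by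
      intro x
      have := (((hasDerivAt_id x).const_mul Ω₁).add_const (Ω₂ * b)).cexp
      simpa using this
    have hEy : ∀ y : ℂ, HasDerivAt (fun y' => Complex.exp (Ω₁ * a + Ω₂ * y'))
        (Complex.exp (Ω₁ * a + Ω₂ * y) * Ω₂) y := by
      intro y
      have := (((hasDerivAt_id y).const_mul Ω₂).const_add (Ω₁ * a)).cexp
      simpa using this
    rw [hu (a, b), hψ (a, b), hB_def]
    simp only [dX, dY]
    have hψX : (fun x' => ψ (x', b)) =
        fun x' => σ (x', b) / τ (x', b) * Complex.exp (Ω₁ * x' + Ω₂ * b) :=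
      funext fun x => hψ (x, b)
    have hψY : (fun y' => ψ (a, y')) =
        fun y' => σ (a, y') / τ (a, y') * Complex.exp (Ω₁ * a + Ω₂ * y') :=
      funext fun y => hψ (a, y)
    rw [hψX, hψY]
    have hgx : Differentiable ℂ (fun x => σ (x, b)) := sliceX_diff hσ b
    have htx : Differentiable ℂ (fun x => τ (x, b)) := sliceX_diff hτ b
    have hgy : Differentiable ℂ (fun y => σ (a, y)) := sliceY_diff hσ a
    have hty : Differentiable ℂ (fun y => τ (a, y)) := sliceY_diff hτ a
    have eψY : deriv (fun y' => σ (a, y') / τ (a, y') * Complex.exp (Ω₁ * a + Ω₂ * y')) b =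
        (deriv (fun y => σ (a, y)) b * τ (a, b) - σ (a, b) * deriv (fun y => τ (a, y)) b) /
            τ (a, b) ^ 2 * Complex.exp (Ω₁ * a + Ω₂ * b)
          + σ (a, b) / τ (a, b) * (Complex.exp (Ω₁ * a + Ω₂ * b) * Ω₂) :=
      deriv_quot_mul hgy hty hEy hp'
    have eψX : deriv (fun x => deriv (fun x' =>
          σ (x', b) / τ (x', b) * Complex.exp (Ω₁ * x' + Ω₂ * b)) x) a =
        ((deriv (deriv (fun x => σ (x, b))) a * τ (a, b)
            + deriv (fun x => σ (x, b)) a * deriv (fun x => τ (x, b)) a -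
            (deriv (fun x => σ (x, b)) a * deriv (fun x => τ (x, b)) a
              + σ (a, b) * deriv (deriv (fun x => τ (x, b))) a)) * τ (a, b) ^ 2 -
          (deriv (fun x => σ (x, b)) a * τ (a, b) - σ (a, b) * deriv (fun x => τ (x, b)) a)
            * (2 * τ (a, b) * deriv (fun x => τ (x, b)) a)) / (τ (a, b) ^ 2) ^ 2
            * Complex.exp (Ω₁ * a + Ω₂ * b)
          + (deriv (fun x => σ (x, b)) a * τ (a, b)
              - σ (a, b) * deriv (fun x => τ (x, b)) a) / τ (a, b) ^ 2
            * (Complex.exp (Ω₁ * a + Ω₂ * b) * Ω₁)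
          + ((deriv (fun x => σ (x, b)) a * τ (a, b)
              - σ (a, b) * deriv (fun x => τ (x, b)) a) / τ (a, b) ^ 2
              * (Complex.exp (Ω₁ * a + Ω₂ * b) * Ω₁)
            + σ (a, b) / τ (a, b) * (Complex.exp (Ω₁ * a + Ω₂ * b) * Ω₁ * Ω₁)) :=
      deriv2_formula hgx htx hEx hp'
    have eu : deriv (fun x => deriv (fun x' => τ (x', b)) x / τ (x, b)) a =
        (deriv (deriv (fun x => τ (x, b))) a * τ (a, b)
          - deriv (fun x => τ (x, b)) a * deriv (fun x => τ (x, b)) a) / τ (a, b) ^ 2 :=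
      deriv_quot_formula htx hp'
    rw [eψY, eψX, eu]
    have hexp : Complex.exp (Ω₁ * a + Ω₂ * b) ≠ 0 := Complex.exp_ne_zero _
    have hinv : τ (a, b) * (τ (a, b))⁻¹ = 1 := mul_inv_cancel₀ hp'
    linear_combination
      (2 * deriv (fun x => σ (x, b)) a * deriv (fun x => τ (x, b)) a *
          Complex.exp (Ω₁ * a + Ω₂ * b) * (τ (a, b))⁻¹ ^ 2
        - τ (a, b) * deriv (deriv (fun x => σ (x, b))) a *
          Complex.exp (Ω₁ * a + Ω₂ * b) * (τ (a, b))⁻¹ ^ 2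
        + 2 * τ (a, b) * deriv (fun x => σ (x, b)) a * deriv (fun x => τ (x, b)) a *
          (τ (a, b))⁻¹ ^ 3 * Complex.exp (Ω₁ * a + Ω₂ * b)
        - τ (a, b) ^ 2 * deriv (deriv (fun x => σ (x, b))) a *
          Complex.exp (Ω₁ * a + Ω₂ * b) * (τ (a, b))⁻¹ ^ 3
        - σ (a, b) * Complex.exp (Ω₁ * a + Ω₂ * b) * b₁ * (τ (a, b))⁻¹
        - σ (a, b) * Complex.exp (Ω₁ * a + Ω₂ * b) * Ω₂ * (τ (a, b))⁻¹
        + σ (a, b) * Complex.exp (Ω₁ * a + Ω₂ * b) * Ω₁ ^ 2 * (τ (a, b))⁻¹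
        - σ (a, b) * deriv (deriv (fun x => τ (x, b))) a *
          Complex.exp (Ω₁ * a + Ω₂ * b) * (τ (a, b))⁻¹ ^ 2
        - 2 * σ (a, b) * deriv (fun x => τ (x, b)) a ^ 2 *
          Complex.exp (Ω₁ * a + Ω₂ * b) * (τ (a, b))⁻¹ ^ 3
        + σ (a, b) * τ (a, b) * deriv (deriv (fun x => τ (x, b))) a *
          Complex.exp (Ω₁ * a + Ω₂ * b) * (τ (a, b))⁻¹ ^ 3) * hinv
  constructor
  · intro H p
    by_cases hτ0 : ∀ q, τ q = 0
    · have hXτ : ∀ q : ℂ × ℂ, dX τ q = 0 := by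
        intro q
        show deriv (fun x => τ (x, q.2)) q.1 = 0
        rw [show (fun x => τ (x, q.2)) = fun _ => (0 : ℂ) from funext fun x => hτ0 _]
        simp
      have hYτ : dY τ p = 0 := by
        show deriv (fun y => τ (p.1, y)) p.2 = 0
        rw [show (fun y => τ (p.1, y)) = fun _ => (0 : ℂ) from funext fun y => hτ0 _]
        simp
      have hXXτ : dX (dX τ) p = 0 := by
        show deriv (fun x => dX τ (x, p.2)) p.1 = 0
        rw [show (fun x => dX τ (x, p.2)) = fun _ => (0 : ℂ) from funext fun x => hXτ _]
        simp
      show B p = 0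
      rw [hB_def]
      simp only [hτ0 p, hXτ p, hYτ, hXXτ]
      ring
    · push_neg at hτ0
      obtain ⟨q0, hq0⟩ := hτ0
      have hBcont : Continuous B := by
        rw [hB_def]
        have cσ : Continuous σ := hσ.continuous
        have cτ : Continuous τ := hτ.continuous
        have c1 : Continuous (dY σ) := cont_dY hσ
        have c2 : Continuous (dY τ) := cont_dY hτ
        have c3 : Continuous (dX (dX σ)) := cont_dXX hσ
        have c4 : Continuous (dX σ) := cont_dX hσ
        have c5 : Continuous (dX τ) := cont_dX hτ
        have c6 : Continuous (dX (dX τ)) := cont_dXX hτ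
        exact ((((c1.mul cτ).sub (cσ.mul c2)).sub
          (((c3.mul cτ).sub ((continuous_const.mul c4).mul c5)).add
            (cσ.mul c6))).sub
          (continuous_const.mul ((c4.mul cτ).sub (cσ.mul c5)))).add
          ((continuous_const.mul cσ).mul cτ)
      have hS0 : Set.EqOn B (fun _ => (0 : ℂ)) {q : ℂ × ℂ | τ q ≠ 0} := by
        intro q hq
        have h2 : B q * Complex.exp (Ω₁ * q.1 + Ω₂ * q.2) / τ q ^ 2 = 0 :=
          (key q hq).symm.trans (H q hq)
        have h3 := (div_eq_zero_iff.mp h2).resolve_right (pow_ne_zero 2 hq)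
        rcases mul_eq_zero.mp h3 with h | h
        · exact h
        · exact absurd h (Complex.exp_ne_zero _)
      have hdense := dense_ne_zero hτ hq0
      have := hBcont.ext_on hdense continuous_const hS0
      exact congrFun this p
  · intro H p hp
    rw [key p hp]
    show B p * _ / _ = 0
    rw [show B p = 0 from H p]
    simp
end

section
/- Let θ : ℂ^g → ℂ be holomorphic, let U, V, A ∈ ℂ^g and Ω₀, Ω₁, b₁ ∈ ℂ. Define τ(x,y) = θ(xU + yV + Z), σ(x,y) = θ(A + xU + yV + Z), u = b₁ + ∂_y log τ(x+1,y) - ∂_y log τ(x,y), and ψ(x,y) = (σ(x,y)/τ(x,y))·exp(xΩ₀ + yΩ₁). Then the differential-functional equation ∂_yψ(x,y) - ψ(x+1,y) - u·ψ(x,y) = 0 holds for all x, y where the denominators are nonzero and all Z ∈ ℂ^g if and only if for all z ∈ ℂ^g: ∂_V θ(z+A)·θ(z+U) - θ(z+A)·∂_V θ(z+U) + (Ω₁ - b₁)·θ(z+A)·θ(z+U) - e^{Ω₀}·θ(z+A+U)·θ(z) = 0. -/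
open Complex

/-- Directional derivative of `θ : ℂ^g → ℂ` along the vector `V`. -/
noncomputable def dirD {g : ℕ} (θ : (Fin g → ℂ) → ℂ) (V : Fin g → ℂ) :
    (Fin g → ℂ) → ℂ :=
  fun z => fderiv ℂ θ z V

section Aux

open Metric

lemma lineDeriv' {g : ℕ} (θ : (Fin g → ℂ) → ℂ) (hθ : Differentiable ℂ θ) (V c : Fin g → ℂ)
    (y : ℂ) :
    HasDerivAt (fun y : ℂ => θ (c + y • V)) (fderiv ℂ θ (c + y • V) V) y := by
  have hline : HasDerivAt (fun y : ℂ => c + y • V) V y := by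
    simpa using ((hasDerivAt_id y).smul_const V).const_add c
  exact (hθ (c + y • V)).hasFDerivAt.comp_hasDerivAt y hline

lemma lineDiff {g : ℕ} (θ : (Fin g → ℂ) → ℂ) (hθ : Differentiable ℂ θ) (c d : Fin g → ℂ) :
    Differentiable ℂ (fun t : ℂ => θ (c + t • d)) :=
  fun t => (lineDeriv' θ hθ d c t).differentiableAt

lemma contD {g : ℕ} (θ : (Fin g → ℂ) → ℂ) (hθ : Differentiable ℂ θ) (V : Fin g → ℂ) :
    Continuous (fun z => fderiv ℂ θ z V) := by
  rw [continuous_iff_continuousAt]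
  intro z₀
  rw [Metric.continuousAt_iff]
  intro ε hε
  have hK : IsCompact (closedBall z₀ (1 + ‖V‖)) := isCompact_closedBall _ _
  have hu : UniformContinuousOn θ (closedBall z₀ (1 + ‖V‖)) :=
    hK.uniformContinuousOn_of_continuous hθ.continuous.continuousOn
  rw [Metric.uniformContinuousOn_iff] at hu
  obtain ⟨δ₀, hδ₀, hd⟩ := hu (ε/2) (by positivity)
  refine ⟨min δ₀ 1, by positivity, fun {z} hz => ?_⟩
  have hz1 : dist z z₀ < 1 := lt_of_lt_of_le hz (min_le_right _ _)
  have hzδ : dist z z₀ < δ₀ := lt_of_lt_of_le hz (min_le_left _ _)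
  set F : ℂ → ℂ := fun s => θ (z + s • V) - θ (z₀ + s • V) with hF
  have hFdiff : Differentiable ℂ F := by
    intro s
    exact ((lineDeriv' θ hθ V z s).sub (lineDeriv' θ hθ V z₀ s)).differentiableAt
  have hmem : ∀ w : Fin g → ℂ, dist w z₀ < 1 → ∀ s ∈ sphere (0:ℂ) 1,
      w + s • V ∈ closedBall z₀ (1 + ‖V‖) := by
    intro w hw s hs
    rw [mem_closedBall]
    have : dist (w + s • V) z₀ ≤ dist w z₀ + ‖s • V‖ := by
      rw [dist_eq_norm, dist_eq_norm] at *
      calc ‖w + s • V - z₀‖ = ‖(w - z₀) + s • V‖ := by ring_nf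
        _ ≤ ‖w - z₀‖ + ‖s • V‖ := norm_add_le _ _
    have hsn : ‖s • V‖ ≤ ‖V‖ := by
      rw [norm_smul]
      simp only [mem_sphere_iff_norm, sub_zero] at hs
      simp [hs]
    linarith
  have hbound : ∀ s ∈ sphere (0:ℂ) 1, ‖F s‖ ≤ ε / 2 := by
    intro s hs
    have h1 := hmem z hz1 s hs
    have h2 := hmem z₀ (by simp) s hs
    have := hd _ h1 _ h2 (by
      rw [dist_eq_norm]
      have : z + s • V - (z₀ + s • V) = z - z₀ := by ring_nf
      rw [this, ← dist_eq_norm]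
      exact hzδ)
    rw [dist_eq_norm] at this
    exact le_of_lt this
  have hder : deriv F 0 = fderiv ℂ θ z V - fderiv ℂ θ z₀ V := by
    have h1 := lineDeriv' θ hθ V z 0
    have h2 := lineDeriv' θ hθ V z₀ 0
    have := (h1.sub h2).deriv
    simp only [zero_smul, add_zero] at this; exact this
  have hle : ‖deriv F 0‖ ≤ (ε/2) / 1 := by
    have := Complex.norm_deriv_le_of_forall_mem_sphere_norm_le (c := (0:ℂ)) (R := 1) (f := F) one_pos
      hFdiff.diffContOnCl (by simpa using hbound)
    simpa using this
  rw [dist_eq_norm, ← hder]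
  calc ‖deriv F 0‖ ≤ ε/2 := by simpa using hle
    _ < ε := by linarith

lemma oneD_zero (f : ℂ → ℂ) (hf : Differentiable ℂ f) (a : ℂ) (h : f =ᶠ[nhds a] 0) :
    ∀ z, f z = 0 := by
  intro z
  have hA : AnalyticOnNhd ℂ f Set.univ := fun w _ => hf.analyticAt w
  have := hA.eqOn_of_preconnected_of_eventuallyEq (analyticOnNhd_const)
      isPreconnected_univ (Set.mem_univ a) h (Set.mem_univ z)
  exact this

lemma oneD_domain (f h : ℂ → ℂ) (hf : Differentiable ℂ f) (hh : Differentiable ℂ h)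
    (hz : ∀ t, f t * h t = 0) (a : ℂ) (ha : f a ≠ 0) : ∀ t, h t = 0 := by
  apply oneD_zero h hh a
  filter_upwards [hf.continuous.continuousAt.eventually_ne ha] with w hw
  simpa [hw] using (mul_eq_zero.1 (hz w)).resolve_left hw

lemma oneD_dense (f : ℂ → ℂ) (hf : Differentiable ℂ f) (t₀ : ℂ) (ε : ℝ) (hε : 0 < ε)
    (hno : ∀ t, dist t t₀ < ε → f t = 0) : ∀ t, f t = 0 := by
  apply oneD_zero f hf t₀
  filter_upwards [Metric.ball_mem_nhds t₀ hε] with t ht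
  exact hno t ht

lemma densS {g : ℕ} (θ : (Fin g → ℂ) → ℂ) (hθ : Differentiable ℂ θ) (U : Fin g → ℂ)
    (a : Fin g → ℂ) (ha : θ a ≠ 0) (z₀ : Fin g → ℂ) (ε : ℝ) (hε : 0 < ε) :
    ∃ z, dist z z₀ < ε ∧ θ z ≠ 0 ∧ θ (z + U) ≠ 0 := by
  set d : Fin g → ℂ := a - (z₀ + U) with hd
  have hf1 : Differentiable ℂ (fun t : ℂ => θ ((z₀ + U) + t • d)) := lineDiff θ hθ _ _
  have h1 : ∃ t : ℂ, dist t 0 < ε / (2 * (‖d‖ + 1)) ∧ θ ((z₀ + U) + t • d) ≠ 0 := by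
    by_contra hcon
    push_neg at hcon
    have := oneD_dense _ hf1 0 (ε / (2 * (‖d‖ + 1))) (by positivity) hcon 1
    apply ha
    simpa [hd] using this
  obtain ⟨t₁, ht₁, hz₁U⟩ := h1
  set z₁ : Fin g → ℂ := z₀ + t₁ • d with hz₁
  have hz₁U' : θ (z₁ + U) ≠ 0 := by
    have e : z₁ + U = (z₀ + U) + t₁ • d := by rw [hz₁]; module
    rw [e]; exact hz₁U
  have hdist₁ : dist z₁ z₀ < ε / 2 := by
    rw [hz₁, dist_eq_norm]
    have e : z₀ + t₁ • d - z₀ = t₁ • d := by module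
    rw [e, norm_smul]
    have h₁ : ‖t₁‖ < ε / (2 * (‖d‖ + 1)) := by simpa using ht₁
    have hd1 : ‖d‖ < ‖d‖ + 1 := by linarith
    calc ‖t₁‖ * ‖d‖ ≤ ‖t₁‖ * (‖d‖ + 1) := by
          have := norm_nonneg t₁; nlinarith [norm_nonneg d]
      _ < ε / (2 * (‖d‖ + 1)) * (‖d‖ + 1) := by
          have : (0:ℝ) < ‖d‖ + 1 := by positivity
          exact mul_lt_mul_of_pos_right h₁ this
      _ = ε / 2 := by field_simp
  set d' : Fin g → ℂ := a - z₁ with hd'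
  have hf2 : Differentiable ℂ (fun t : ℂ => θ (z₁ + t • d')) := lineDiff θ hθ _ _
  have hf3 : Differentiable ℂ (fun t : ℂ => θ ((z₁ + U) + t • d')) := lineDiff θ hθ _ _
  have h2 : ∃ t : ℂ, dist t 0 < ε / (2 * (‖d'‖ + 1)) ∧
      θ ((z₁ + U) + t • d') * θ (z₁ + t • d') ≠ 0 := by
    by_contra hcon
    push_neg at hcon
    have hq : ∀ t, θ ((z₁ + U) + t • d') * θ (z₁ + t • d') = 0 :=
      oneD_dense _ (hf3.mul hf2) 0 (ε / (2 * (‖d'‖ + 1))) (by positivity) hcon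
    have hzero : ∀ t : ℂ, θ (z₁ + t • d') = 0 :=
      oneD_domain (fun t : ℂ => θ ((z₁ + U) + t • d')) (fun t : ℂ => θ (z₁ + t • d'))
        hf3 hf2 hq 0 (by simpa using hz₁U')
    apply ha
    have := hzero 1
    simpa [hd'] using this
  obtain ⟨t₂, ht₂, hq₂⟩ := h2
  refine ⟨z₁ + t₂ • d', ?_, ?_, ?_⟩
  · have hdist₂ : dist (z₁ + t₂ • d') z₁ < ε / 2 := by
      rw [dist_eq_norm]
      have e : z₁ + t₂ • d' - z₁ = t₂ • d' := by module
      rw [e, norm_smul]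
      have h₁ : ‖t₂‖ < ε / (2 * (‖d'‖ + 1)) := by simpa using ht₂
      calc ‖t₂‖ * ‖d'‖ ≤ ‖t₂‖ * (‖d'‖ + 1) := by
            have := norm_nonneg t₂; nlinarith [norm_nonneg d']
        _ < ε / (2 * (‖d'‖ + 1)) * (‖d'‖ + 1) := by
            have : (0:ℝ) < ‖d'‖ + 1 := by positivity
            exact mul_lt_mul_of_pos_right h₁ this
        _ = ε / 2 := by field_simp
    calc dist (z₁ + t₂ • d') z₀ ≤ dist (z₁ + t₂ • d') z₁ + dist z₁ z₀ := dist_triangle _ _ _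
      _ < ε / 2 + ε / 2 := add_lt_add hdist₂ hdist₁
      _ = ε := by ring
  · exact fun h => hq₂ (by rw [h, mul_zero])
  · intro h
    apply hq₂
    have e : (z₁ + U) + t₂ • d' = z₁ + t₂ • d' + U := by module
    rw [e, h, zero_mul]

lemma alg (T1 T2 T3 T4 D1 D2 D3 E eΩ b₁ Ω₁ : ℂ) (h2 : T2 ≠ 0) (h3 : T3 ≠ 0) :
    (D1 * T2 - T1 * D2) / T2 ^ 2 * E + T1 / T2 * (E * Ω₁) - T4 / T3 * (eΩ * E)
      - (b₁ + D3 / T3 - D2 / T2) * (T1 / T2 * E)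
    = E * (D1 * T3 - T1 * D3 + (Ω₁ - b₁) * T1 * T3 - eΩ * T4 * T2) / (T2 * T3) := by
  linear_combination (E * (D1 * T2⁻¹ + T4 * eΩ * T3⁻¹)) * (mul_inv_cancel₀ h2)
    + (E * T2⁻¹ * (b₁ * T1 - T1 * Ω₁ - D1)) * (mul_inv_cancel₀ h3)

lemma key {g : ℕ} (θ : (Fin g → ℂ) → ℂ) (hθ : Differentiable ℂ θ)
    (U V A : Fin g → ℂ) (Ω₀ Ω₁ b₁ : ℂ) (Z : Fin g → ℂ) (x y : ℂ)
    (h2 : θ (x • U + y • V + Z) ≠ 0) (h3 : θ ((x + 1) • U + y • V + Z) ≠ 0) :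
    dY (fun q => θ (A + q.1 • U + q.2 • V + Z) / θ (q.1 • U + q.2 • V + Z) *
          Complex.exp (q.1 * Ω₀ + q.2 * Ω₁)) (x, y)
      - θ (A + (x + 1) • U + y • V + Z) / θ ((x + 1) • U + y • V + Z) *
          Complex.exp ((x + 1) * Ω₀ + y * Ω₁)
      - (b₁ + dY (fun q => θ (q.1 • U + q.2 • V + Z)) (x + 1, y) / θ ((x + 1) • U + y • V + Z)
           - dY (fun q => θ (q.1 • U + q.2 • V + Z)) (x, y) / θ (x • U + y • V + Z)) *
        (θ (A + x • U + y • V + Z) / θ (x • U + y • V + Z) * Complex.exp (x * Ω₀ + y * Ω₁))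
    = Complex.exp (x * Ω₀ + y * Ω₁) *
        (dirD θ V ((x • U + y • V + Z) + A) * θ ((x • U + y • V + Z) + U)
          - θ ((x • U + y • V + Z) + A) * dirD θ V ((x • U + y • V + Z) + U)
          + (Ω₁ - b₁) * θ ((x • U + y • V + Z) + A) * θ ((x • U + y • V + Z) + U)
          - Complex.exp Ω₀ * θ ((x • U + y • V + Z) + A + U) * θ (x • U + y • V + Z))
      / (θ (x • U + y • V + Z) * θ ((x • U + y • V + Z) + U)) := by
  set z := x • U + y • V + Z with hz
  have eU : (x + 1) • U + y • V + Z = z + U := by rw [hz]; module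
  have eA : A + x • U + y • V + Z = z + A := by rw [hz]; module
  have eAU : A + (x + 1) • U + y • V + Z = z + A + U := by rw [hz]; module
  have pτ : x • U + Z + y • V = z := by rw [hz]; module
  have pτ' : (x + 1) • U + Z + y • V = z + U := by rw [hz]; module
  have pσ : A + x • U + Z + y • V = z + A := by rw [hz]; module
  have hτ : HasDerivAt (fun y : ℂ => θ (x • U + y • V + Z)) (dirD θ V z) y := by
    have h := lineDeriv' θ hθ V (x • U + Z) y
    rw [pτ] at h
    have he : (fun y : ℂ => θ (x • U + y • V + Z)) = fun y : ℂ => θ (x • U + Z + y • V) := by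
      funext y; congr 1; module
    rw [he]; exact h
  have hτ' : HasDerivAt (fun y : ℂ => θ ((x + 1) • U + y • V + Z)) (dirD θ V (z + U)) y := by
    have h := lineDeriv' θ hθ V ((x + 1) • U + Z) y
    rw [pτ'] at h
    have he : (fun y : ℂ => θ ((x + 1) • U + y • V + Z))
        = fun y : ℂ => θ ((x + 1) • U + Z + y • V) := by
      funext y; congr 1; module
    rw [he]; exact h
  have hσ : HasDerivAt (fun y : ℂ => θ (A + x • U + y • V + Z)) (dirD θ V (z + A)) y := by
    have h := lineDeriv' θ hθ V (A + x • U + Z) y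
    rw [pσ] at h
    have he : (fun y : ℂ => θ (A + x • U + y • V + Z))
        = fun y : ℂ => θ (A + x • U + Z + y • V) := by
      funext y; congr 1; module
    rw [he]; exact h
  have d2 : dY (fun q => θ (q.1 • U + q.2 • V + Z)) (x, y) = dirD θ V z := hτ.deriv
  have d3 : dY (fun q => θ (q.1 • U + q.2 • V + Z)) (x + 1, y) = dirD θ V (z + U) := hτ'.deriv
  have hlin : HasDerivAt (fun y : ℂ => x * Ω₀ + y * Ω₁) Ω₁ y := by
    simpa using (hasDerivAt_mul_const Ω₁ (x := y)).const_add (x * Ω₀)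
  have hexp : HasDerivAt (fun y : ℂ => Complex.exp (x * Ω₀ + y * Ω₁))
      (Complex.exp (x * Ω₀ + y * Ω₁) * Ω₁) y := hlin.cexp
  have hψ := (hσ.div hτ h2).mul hexp
  have dψ : dY (fun q => θ (A + q.1 • U + q.2 • V + Z) / θ (q.1 • U + q.2 • V + Z) *
          Complex.exp (q.1 * Ω₀ + q.2 * Ω₁)) (x, y)
      = (dirD θ V (z + A) * θ (x • U + y • V + Z)
          - θ (A + x • U + y • V + Z) * dirD θ V z) / θ (x • U + y • V + Z) ^ 2 *
          Complex.exp (x * Ω₀ + y * Ω₁)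
        + θ (A + x • U + y • V + Z) / θ (x • U + y • V + Z) *
          (Complex.exp (x * Ω₀ + y * Ω₁) * Ω₁) := hψ.deriv
  rw [dψ, d2, d3, eU, eA, eAU]
  rw [show Complex.exp ((x + 1) * Ω₀ + y * Ω₁)
      = Complex.exp Ω₀ * Complex.exp (x * Ω₀ + y * Ω₁) by
    rw [← Complex.exp_add]; ring_nf]
  rw [eU] at h3
  exact alg (θ (z + A)) (θ z) (θ (z + U)) (θ (z + A + U)) (dirD θ V (z + A)) (dirD θ V z)
    (dirD θ V (z + U)) (Complex.exp (x * Ω₀ + y * Ω₁)) (Complex.exp Ω₀) b₁ Ω₁ h2 h3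

lemma extendB {g : ℕ} (θ : (Fin g → ℂ) → ℂ) (hθ : Differentiable ℂ θ)
    (U V A : Fin g → ℂ) (Ω₀ Ω₁ b₁ : ℂ)
    (hS : ∀ z, θ z ≠ 0 → θ (z + U) ≠ 0 →
      dirD θ V (z + A) * θ (z + U) - θ (z + A) * dirD θ V (z + U)
        + (Ω₁ - b₁) * θ (z + A) * θ (z + U)
        - Complex.exp Ω₀ * θ (z + A + U) * θ z = 0) :
    ∀ z, dirD θ V (z + A) * θ (z + U) - θ (z + A) * dirD θ V (z + U)
        + (Ω₁ - b₁) * θ (z + A) * θ (z + U)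
        - Complex.exp Ω₀ * θ (z + A + U) * θ z = 0 := by
  by_cases hall : ∀ w, θ w = 0
  · intro z; simp [hall]
  · push_neg at hall
    obtain ⟨a, ha⟩ := hall
    have hD : Continuous (fun z : Fin g → ℂ => fderiv ℂ θ z V) := contD θ hθ V
    have hc : Continuous θ := hθ.continuous
    have hBc : Continuous (fun z : Fin g → ℂ =>
        dirD θ V (z + A) * θ (z + U) - θ (z + A) * dirD θ V (z + U)
          + (Ω₁ - b₁) * θ (z + A) * θ (z + U)
          - Complex.exp Ω₀ * θ (z + A + U) * θ z) := by
      unfold dirD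
      fun_prop
    have hdense : Dense {z : Fin g → ℂ | θ z ≠ 0 ∧ θ (z + U) ≠ 0} := by
      rw [Metric.dense_iff]
      intro x r hr
      obtain ⟨z, hz, h1, h2⟩ := densS θ hθ U a ha x r hr
      exact ⟨z, Metric.mem_ball.2 hz, h1, h2⟩
    have := Continuous.ext_on hdense hBc continuous_const
      (fun z hz => hS z hz.1 hz.2)
    exact fun z => congrFun this z

end Aux

/-- For holomorphic `θ : ℂ^g → ℂ`, vectors `U, V, A` and constants
`Ω₀, Ω₁, b₁`, with `τ(x,y) = θ(xU+yV+Z)`, `σ(x,y) = θ(A+xU+yV+Z)`,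
`u = b₁ + ∂_y log τ(x+1,y) - ∂_y log τ(x,y)` and
`ψ = (σ/τ)·exp(xΩ₀+yΩ₁)`, the differential-functional equation
`∂_yψ(x,y) - ψ(x+1,y) - u·ψ(x,y) = 0` holds (wherever denominators are nonzero,
for every `Z`) iff the bilinear identity
`∂_Vθ(z+A)·θ(z+U) - θ(z+A)·∂_Vθ(z+U) + (Ω₁-b₁)·θ(z+A)·θ(z+U)
  - e^{Ω₀}·θ(z+A+U)·θ(z) = 0` holds for all `z ∈ ℂ^g`. -/
theorem stmt2 (g : ℕ) (θ : (Fin g → ℂ) → ℂ) (hθ : Differentiable ℂ θ)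
    (U V A : Fin g → ℂ) (Ω₀ Ω₁ b₁ : ℂ) :
    (∀ Z : Fin g → ℂ,
      let τ : ℂ × ℂ → ℂ := fun p => θ (p.1 • U + p.2 • V + Z)
      let σ : ℂ × ℂ → ℂ := fun p => θ (A + p.1 • U + p.2 • V + Z)
      let ψ : ℂ × ℂ → ℂ := fun p => σ p / τ p * Complex.exp (p.1 * Ω₀ + p.2 * Ω₁)
      let u : ℂ × ℂ → ℂ := fun p =>
        b₁ + dY τ (p.1 + 1, p.2) / τ (p.1 + 1, p.2) - dY τ p / τ p
      ∀ p : ℂ × ℂ, τ p ≠ 0 → τ (p.1 + 1, p.2) ≠ 0 →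
        dY ψ p - ψ (p.1 + 1, p.2) - u p * ψ p = 0) ↔
    (∀ z : Fin g → ℂ,
      dirD θ V (z + A) * θ (z + U) - θ (z + A) * dirD θ V (z + U)
        + (Ω₁ - b₁) * θ (z + A) * θ (z + U)
        - Complex.exp Ω₀ * θ (z + A + U) * θ z = 0) := by
  constructor
  · intro h
    apply extendB θ hθ U V A Ω₀ Ω₁ b₁
    intro z hz1 hz2
    have hA : θ ((0:ℂ) • U + (0:ℂ) • V + z) ≠ 0 := by
      have e : (0:ℂ) • U + (0:ℂ) • V + z = z := by module
      rw [e]; exact hz1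
    have hB : θ (((0:ℂ) + 1) • U + (0:ℂ) • V + z) ≠ 0 := by
      have e : ((0:ℂ) + 1) • U + (0:ℂ) • V + z = z + U := by module
      rw [e]; exact hz2
    have h0 : dY (fun q => θ (A + q.1 • U + q.2 • V + z) / θ (q.1 • U + q.2 • V + z) *
          Complex.exp (q.1 * Ω₀ + q.2 * Ω₁)) ((0:ℂ), (0:ℂ))
        - θ (A + ((0:ℂ) + 1) • U + (0:ℂ) • V + z) / θ (((0:ℂ) + 1) • U + (0:ℂ) • V + z) *
            Complex.exp (((0:ℂ) + 1) * Ω₀ + (0:ℂ) * Ω₁)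
        - (b₁ + dY (fun q => θ (q.1 • U + q.2 • V + z)) ((0:ℂ) + 1, (0:ℂ)) /
              θ (((0:ℂ) + 1) • U + (0:ℂ) • V + z)
            - dY (fun q => θ (q.1 • U + q.2 • V + z)) ((0:ℂ), (0:ℂ)) /
              θ ((0:ℂ) • U + (0:ℂ) • V + z)) *
          (θ (A + (0:ℂ) • U + (0:ℂ) • V + z) / θ ((0:ℂ) • U + (0:ℂ) • V + z) *
            Complex.exp ((0:ℂ) * Ω₀ + (0:ℂ) * Ω₁)) = 0 := h z ((0:ℂ), (0:ℂ)) hA hB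
    rw [key θ hθ U V A Ω₀ Ω₁ b₁ z 0 0 hA hB] at h0
    have e0 : (0:ℂ) • U + (0:ℂ) • V + z = z := by module
    rw [e0] at h0
    rcases div_eq_zero_iff.1 h0 with h1 | h1
    · exact (mul_eq_zero.1 h1).resolve_left (Complex.exp_ne_zero _)
    · exact absurd h1 (mul_ne_zero hz1 hz2)
  · intro h Z
    intro τ σ ψ u p hp2 hp3
    have hp2' : θ (p.1 • U + p.2 • V + Z) ≠ 0 := hp2
    have hp3' : θ ((p.1 + 1) • U + p.2 • V + Z) ≠ 0 := hp3
    have hk := key θ hθ U V A Ω₀ Ω₁ b₁ Z p.1 p.2 hp2' hp3'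
    have hB := h (p.1 • U + p.2 • V + Z)
    rw [hB] at hk
    have : dY (fun q => θ (A + q.1 • U + q.2 • V + Z) / θ (q.1 • U + q.2 • V + Z) *
          Complex.exp (q.1 * Ω₀ + q.2 * Ω₁)) (p.1, p.2)
        - θ (A + (p.1 + 1) • U + p.2 • V + Z) / θ ((p.1 + 1) • U + p.2 • V + Z) *
            Complex.exp ((p.1 + 1) * Ω₀ + p.2 * Ω₁)
        - (b₁ + dY (fun q => θ (q.1 • U + q.2 • V + Z)) (p.1 + 1, p.2) /
              θ ((p.1 + 1) • U + p.2 • V + Z)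
            - dY (fun q => θ (q.1 • U + q.2 • V + Z)) (p.1, p.2) /
              θ (p.1 • U + p.2 • V + Z)) *
          (θ (A + p.1 • U + p.2 • V + Z) / θ (p.1 • U + p.2 • V + Z) *
            Complex.exp (p.1 * Ω₀ + p.2 * Ω₁)) = 0 := by
      rw [hk]
      simp
    exact this
end

section
/- Let n, N be positive integers, let q, α be smooth functions of t with α(t) ≠ 0, and suppose ψ(x,t) is meromorphic in x near x = q(t) with Laurent expansion ψ = α(t)(x−q(t))^{−n} + O((x−q(t))^{−n+1}), and u(x,t) = 2N(x−q(t))^{−2} + O(1). If (∂_t − ∂ₓ³ + (3/2)u∂ₓ + (3/4)u_x + b₃)ψ = 0 near x = q(t) for a constant b₃, then 3N = n(n+2). -/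
open Filter Metric

private lemma analyticAt_deriv'' {f : ℂ → ℂ} {x : ℂ} (h : AnalyticAt ℂ f x) :
    AnalyticAt ℂ (deriv f) x := by
  have h2 : (fun y => (fderiv ℂ f y) 1) = deriv f := by
    funext y; exact fderiv_apply_one_eq_deriv
  rw [← h2]
  exact ((ContinuousLinearMap.apply ℂ ℂ (1:ℂ)).analyticAt _).comp h.fderiv

private lemma keyD15 {F : ℂ → ℂ} {c x : ℂ} (hx : x ≠ c) (hF : DifferentiableAt ℂ F x) (k : ℕ) :
    deriv (fun y => F y / (y - c) ^ (k+1)) x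
      = (deriv F x * (x - c) - ((k:ℂ)+1) * F x) / (x - c) ^ (k + 2) := by
  have hz : x - c ≠ 0 := sub_ne_zero.mpr hx
  have hpow : HasDerivAt (fun y : ℂ => (y - c) ^ (k+1))
      (((k:ℂ)+1) * (x - c) ^ k * 1) x := by
    simpa [Function.comp_def] using (hasDerivAt_pow (k+1) (x - c)).comp x ((hasDerivAt_id x).sub_const c)
  have := (hF.hasDerivAt.fun_div hpow (pow_ne_zero _ hz)).deriv
  rw [this]
  field_simp
  ring

set_option maxHeartbeats 1000000 in
/-- Suppose `ψ(x,t)` is meromorphic in `x` near `x = q(t)` with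
Laurent expansion `ψ = α(t)(x−q(t))^{−n} + O((x−q(t))^{−n+1})`, and
`u(x,t) = 2N(x−q(t))^{−2} + O(1)`, with `q, α` smooth, `α(t) ≠ 0`. If
`(∂_t − ∂ₓ³ + (3/2)u∂ₓ + (3/4)u_x + b₃)ψ = 0` near `x = q(t)`, then
`3N = n(n+2)`. -/
theorem stmt15 (n N : ℕ) (hn : 0 < n) (hN : 0 < N)
    (q α : ℝ → ℂ) (hq : ContDiff ℝ (⊤ : ℕ∞) q) (hα : ContDiff ℝ (⊤ : ℕ∞) α)
    (hα0 : ∀ t, α t ≠ 0)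
    (ψ u ρ v : ℂ → ℝ → ℂ) (b₃ : ℂ)
    -- the regular parts `ρ` (of `ψ·(x−q)^n`, giving the `O((x−q)^{−n+1})` term)
    -- and `v` (of `u`) are smooth and analytic in `x` at the pole:
    (hρ : ContDiff ℝ (⊤ : ℕ∞) fun p : ℂ × ℝ => ρ p.1 p.2)
    (hρx : ∀ t, AnalyticAt ℂ (fun x => ρ x t) (q t))
    (hv : ContDiff ℝ (⊤ : ℕ∞) fun p : ℂ × ℝ => v p.1 p.2)
    (hvx : ∀ t, AnalyticAt ℂ (fun x => v x t) (q t))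
    -- Laurent expansions of `ψ` and `u` near the pole:
    (hψ : ∀ t, ∀ x ≠ q t,
      ψ x t = α t / (x - q t) ^ n + ρ x t / (x - q t) ^ (n - 1))
    (hu : ∀ t, ∀ x ≠ q t,
      u x t = 2 * (N : ℂ) / (x - q t) ^ 2 + v x t)
    -- the third-order Lax equation near the pole:
    (hPDE : ∀ t, ∀ x ≠ q t,
      deriv (fun s => ψ x s) t - deriv^[3] (fun w => ψ w t) x
        + (3 / 2) * u x t * deriv (fun w => ψ w t) x
        + (3 / 4) * deriv (fun w => u w t) x * ψ x t + b₃ * ψ x t = 0) :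
    3 * N = n * (n + 2) := by
  obtain ⟨k, rfl⟩ : ∃ k, n = k + 1 := ⟨n - 1, (Nat.succ_pred_eq_of_pos hn).symm⟩
  obtain ⟨c, hcdef⟩ : ∃ c : ℂ, c = q 0 := ⟨_, rfl⟩
  -- a neighborhood of `c` on which `ρ(·,0)` and `v(·,0)` are analytic
  have hev : ∀ᶠ y in nhds c, AnalyticAt ℂ (fun w => ρ w 0) y ∧ AnalyticAt ℂ (fun w => v w 0) y := by
    rw [hcdef]
    exact (hρx 0).eventually_analyticAt.and (hvx 0).eventually_analyticAt
  rw [Metric.eventually_nhds_iff] at hev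
  obtain ⟨r, hr, hball⟩ := hev
  obtain ⟨s, hsdef⟩ : ∃ s : Set ℂ, s = Metric.ball c r := ⟨_, rfl⟩
  have hs_open : IsOpen s := hsdef ▸ Metric.isOpen_ball
  have hcs : c ∈ s := hsdef ▸ Metric.mem_ball_self hr
  have hA : ∀ x ∈ s, AnalyticAt ℂ (fun w => ρ w 0) x ∧ AnalyticAt ℂ (fun w => v w 0) x :=
    fun x hx => hball (by have := hsdef ▸ hx; simpa [Metric.mem_ball] using this)
  obtain ⟨s', hs'def⟩ : ∃ s' : Set ℂ, s' = s \ {c} := ⟨_, rfl⟩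
  have hs'_open : IsOpen s' := hs'def ▸ hs_open.sdiff isClosed_singleton
  have hmem_ne : ∀ x ∈ s', x ≠ c := fun x hx => (hs'def ▸ hx).2
  have hmem_s : ∀ x ∈ s', x ∈ s := fun x hx => (hs'def ▸ hx).1
  have hzne : ∀ x ∈ s', x - c ≠ 0 := fun x hx => sub_ne_zero.mpr (hmem_ne x hx)
  -- the regular factors
  obtain ⟨G, hGdef⟩ : ∃ G : ℂ → ℂ, G = fun x => α 0 + ρ x 0 * (x - c) := ⟨_, rfl⟩
  obtain ⟨G1, hG1def⟩ : ∃ G1 : ℂ → ℂ, G1 = fun x => deriv G x * (x - c) - ((k:ℂ)+1) * G x := ⟨_, rfl⟩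
  obtain ⟨G2, hG2def⟩ : ∃ G2 : ℂ → ℂ, G2 = fun x => deriv G1 x * (x - c) - ((k:ℂ)+2) * G1 x := ⟨_, rfl⟩
  obtain ⟨G3, hG3def⟩ : ∃ G3 : ℂ → ℂ, G3 = fun x => deriv G2 x * (x - c) - ((k:ℂ)+3) * G2 x := ⟨_, rfl⟩
  obtain ⟨H, hHdef⟩ : ∃ H : ℂ → ℂ, H = fun x => 2*(N:ℂ) + v x 0 * (x - c)^2 := ⟨_, rfl⟩
  obtain ⟨H1, hH1def⟩ : ∃ H1 : ℂ → ℂ, H1 = fun x => deriv H x * (x - c) - 2 * H x := ⟨_, rfl⟩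
  -- analyticity of the regular factors on s
  have hsub : ∀ x : ℂ, AnalyticAt ℂ (fun y => y - c) x := fun x =>
    (analyticAt_id.sub analyticAt_const)
  have hGA : ∀ x ∈ s, AnalyticAt ℂ G x := fun x hx =>
    hGdef ▸ analyticAt_const.add ((hA x hx).1.mul (hsub x))
  have hG1A : ∀ x ∈ s, AnalyticAt ℂ G1 x := fun x hx =>
    hG1def ▸ (((analyticAt_deriv'' (hGA x hx)).mul (hsub x)).sub (analyticAt_const.mul (hGA x hx)))
  have hG2A : ∀ x ∈ s, AnalyticAt ℂ G2 x := fun x hx =>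
    hG2def ▸ (((analyticAt_deriv'' (hG1A x hx)).mul (hsub x)).sub (analyticAt_const.mul (hG1A x hx)))
  have hG3A : ∀ x ∈ s, AnalyticAt ℂ G3 x := fun x hx =>
    hG3def ▸ (((analyticAt_deriv'' (hG2A x hx)).mul (hsub x)).sub (analyticAt_const.mul (hG2A x hx)))
  have hHA : ∀ x ∈ s, AnalyticAt ℂ H x := fun x hx =>
    hHdef ▸ analyticAt_const.add ((hA x hx).2.mul ((hsub x).pow 2))
  have hH1A : ∀ x ∈ s, AnalyticAt ℂ H1 x := fun x hx =>
    hH1def ▸ (((analyticAt_deriv'' (hHA x hx)).mul (hsub x)).sub (analyticAt_const.mul (hHA x hx)))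
  -- helper for replacing deriv of functions that agree on s'
  have hEq : ∀ (f g : ℂ → ℂ), (∀ y ∈ s', f y = g y) → ∀ x ∈ s', deriv f x = deriv g x := by
    intro f g hfg x hx
    exact Filter.EventuallyEq.deriv_eq
      (by filter_upwards [hs'_open.mem_nhds hx] with y hy using hfg y hy)
  -- Laurent forms
  have hψ0 : ∀ x ∈ s', ψ x 0 = G x / (x - c) ^ (k+1) := by
    intro x hx
    have hz := hzne x hx
    have h := hψ 0 x (by rw [← hcdef]; exact hmem_ne x hx)
    rw [← hcdef] at h
    rw [h, hGdef]
    simp only [Nat.add_sub_cancel]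
    field_simp
    ring
  have hu0 : ∀ x ∈ s', u x 0 = H x / (x - c) ^ 2 := by
    intro x hx
    have hz := hzne x hx
    have h := hu 0 x (by rw [← hcdef]; exact hmem_ne x hx)
    rw [← hcdef] at h
    rw [h, hHdef]
    field_simp
  have h1 : ∀ x ∈ s', deriv (fun w => ψ w 0) x = G1 x / (x - c) ^ (k+2) := by
    intro x hx
    rw [hEq _ (fun y => G y / (y - c) ^ (k+1)) hψ0 x hx,
      keyD15 (hmem_ne x hx) (hGA x (hmem_s x hx)).differentiableAt k, hG1def]
  have h2 : ∀ x ∈ s', deriv^[2] (fun w => ψ w 0) x = G2 x / (x - c) ^ (k+3) := by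
    intro x hx
    rw [show (2:ℕ) = 1+1 from rfl, Function.iterate_succ_apply', Function.iterate_one]
    rw [hEq _ (fun y => G1 y / (y - c) ^ (k+2)) h1 x hx]
    rw [show k+2 = (k+1)+1 from rfl,
      keyD15 (hmem_ne x hx) (hG1A x (hmem_s x hx)).differentiableAt (k+1), hG2def]
    push_cast
    ring_nf
  have h3 : ∀ x ∈ s', deriv^[3] (fun w => ψ w 0) x = G3 x / (x - c) ^ (k+4) := by
    intro x hx
    rw [show (3:ℕ) = 2+1 from rfl, Function.iterate_succ_apply']
    rw [hEq _ (fun y => G2 y / (y - c) ^ (k+3)) h2 x hx]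
    rw [show k+3 = (k+2)+1 from rfl,
      keyD15 (hmem_ne x hx) (hG2A x (hmem_s x hx)).differentiableAt (k+2), hG3def]
    push_cast
    ring_nf
  have hu1 : ∀ x ∈ s', deriv (fun w => u w 0) x = H1 x / (x - c) ^ 3 := by
    intro x hx
    rw [hEq _ (fun y => H y / (y - c) ^ 2) hu0 x hx,
      show (2:ℕ) = 1+1 from rfl, keyD15 (hmem_ne x hx) (hHA x (hmem_s x hx)).differentiableAt 1,
      hH1def]
    norm_num
  -- time derivative
  obtain ⟨P, hPdef⟩ : ∃ P : ℂ → ℂ,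
      P = fun x => (fderiv ℝ (fun p : ℂ × ℝ => ρ p.1 p.2) (x,0)) ((0:ℂ),(1:ℝ)) := ⟨_, rfl⟩
  have hρd : ∀ x : ℂ, HasDerivAt (fun t => ρ x t) (P x) 0 := by
    intro x
    rw [hPdef]
    exact ((hρ.differentiable (by simp) (x,0)).hasFDerivAt).comp_hasDerivAt 0
      ((hasDerivAt_const (0:ℝ) x).prodMk (hasDerivAt_id 0))
  have hPcont : Continuous P := by
    rw [hPdef]
    exact ((hρ.continuous_fderiv (by simp)).comp (continuous_id.prodMk continuous_const)).clm_apply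
      continuous_const
  obtain ⟨T, hTdef⟩ : ∃ T : ℂ → ℂ,
      T = fun x => deriv α 0 * (x - c)^3 + ((k:ℂ)+1) * α 0 * deriv q 0 * (x - c)^2
        + P x * (x - c)^4 + (k:ℂ) * ρ x 0 * deriv q 0 * (x - c)^3 := ⟨_, rfl⟩
  have ht : ∀ x ∈ s', deriv (fun t => ψ x t) 0 = T x / (x - c)^(k+4) := by
    intro x hx
    have hxc := hmem_ne x hx
    have hz := hzne x hx
    have hne : ∀ᶠ t in nhds (0:ℝ), q t ≠ x := by
      refine (hq.continuous.tendsto 0).eventually_ne ?_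
      rw [← hcdef]; exact Ne.symm hxc
    have heq : (fun t => ψ x t) =ᶠ[nhds (0:ℝ)]
        (fun t => α t / (x - q t)^(k+1) + ρ x t / (x - q t)^k) := by
      filter_upwards [hne] with t htq
      rw [hψ t x (fun h => htq h.symm)]
      norm_num
    rw [heq.deriv_eq]
    have hw : HasDerivAt (fun t => x - q t) (-deriv q 0) 0 :=
      (hq.differentiable (by simp) 0).hasDerivAt.const_sub x
    have hq0 : x - q 0 = x - c := by rw [← hcdef]
    have hw1 : HasDerivAt (fun t => (x - q t)^(k+1)) (((k:ℂ)+1) * (x - c)^k * (-deriv q 0)) 0 := by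
      have hp : HasDerivAt (fun w : ℂ => w ^ (k+1)) (((k:ℂ)+1) * (x - c)^k) (x - q 0) := by
        rw [hq0]; simpa using hasDerivAt_pow (k+1) (x - c)
      simpa [Function.comp_def, smul_eq_mul, mul_comm, mul_assoc, mul_left_comm] using
        HasDerivAt.scomp (0:ℝ) hp hw
    have hw2 : HasDerivAt (fun t => (x - q t)^k) ((k:ℂ) * (x - c)^(k-1) * (-deriv q 0)) 0 := by
      have hp : HasDerivAt (fun w : ℂ => w ^ k) ((k:ℂ) * (x - c)^(k-1)) (x - q 0) := by
        rw [hq0]; simpa using hasDerivAt_pow k (x - c)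
      simpa [Function.comp_def, smul_eq_mul, mul_comm, mul_assoc, mul_left_comm] using
        HasDerivAt.scomp (0:ℝ) hp hw
    have hαd : HasDerivAt α (deriv α 0) 0 := (hα.differentiable (by simp) 0).hasDerivAt
    have hz1 : (x - q 0)^(k+1) ≠ 0 := by rw [hq0]; exact pow_ne_zero _ hz
    have hz2 : (x - q 0)^k ≠ 0 := by rw [hq0]; exact pow_ne_zero _ hz
    have t1 := hαd.fun_div hw1 hz1
    have t2 := (hρd x).fun_div hw2 hz2
    have hd := (t1.add t2).deriv
    rw [show (fun t => α t / (x - q t) ^ (k + 1) + ρ x t / (x - q t) ^ k) = (fun y => α y / (x - q y) ^ (k + 1)) + (fun y => ρ x y / (x - q y) ^ k) from rfl, hd, hq0, hTdef]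
    rcases Nat.eq_zero_or_pos k with hk | hk
    · subst hk
      field_simp
      ring
    · obtain ⟨j, rfl⟩ : ∃ j, k = j + 1 := ⟨k - 1, (Nat.succ_pred_eq_of_pos hk).symm⟩
      simp only [Nat.add_sub_cancel]
      field_simp
      ring
  -- the combined limit function
  obtain ⟨Φ, hΦdef⟩ : ∃ Φ : ℂ → ℂ,
      Φ = fun x => T x - G3 x + (3/2) * H x * G1 x + (3/4) * H1 x * G x
        + b₃ * G x * (x - c)^3 := ⟨_, rfl⟩
  have hΦ0 : ∀ x ∈ s', Φ x = 0 := by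
    intro x hx
    have hxc := hmem_ne x hx
    have hz := hzne x hx
    have T1 : (x - c)^(k+4) * deriv (fun t => ψ x t) 0 = T x := by
      rw [ht x hx]; field_simp
    have T2 : (x - c)^(k+4) * deriv^[3] (fun w => ψ w 0) x = G3 x := by
      rw [h3 x hx]; field_simp
    have T3 : (x - c)^(k+4) * ((3/2 : ℂ) * u x 0 * deriv (fun w => ψ w 0) x)
        = (3/2) * H x * G1 x := by
      rw [hu0 x hx, h1 x hx]; field_simp; ring
    have T4 : (x - c)^(k+4) * ((3/4 : ℂ) * deriv (fun w => u w 0) x * ψ x 0)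
        = (3/4) * H1 x * G x := by
      rw [hu1 x hx, hψ0 x hx]; field_simp; ring
    have T5 : (x - c)^(k+4) * (b₃ * ψ x 0) = b₃ * G x * (x - c)^3 := by
      rw [hψ0 x hx]; field_simp; ring
    have hpde := hPDE 0 x (by rw [← hcdef]; exact hxc)
    calc Φ x = (x - c)^(k+4) * deriv (fun t => ψ x t) 0
          - (x - c)^(k+4) * deriv^[3] (fun w => ψ w 0) x
          + (x - c)^(k+4) * ((3/2 : ℂ) * u x 0 * deriv (fun w => ψ w 0) x)
          + (x - c)^(k+4) * ((3/4 : ℂ) * deriv (fun w => u w 0) x * ψ x 0)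
          + (x - c)^(k+4) * (b₃ * ψ x 0) := by
            rw [T1, T2, T3, T4, T5, hΦdef]
      _ = (x - c)^(k+4) * (deriv (fun t => ψ x t) 0 - deriv^[3] (fun w => ψ w 0) x
          + 3 / 2 * u x 0 * deriv (fun w => ψ w 0) x
          + 3 / 4 * deriv (fun w => u w 0) x * ψ x 0 + b₃ * ψ x 0) := by ring
      _ = 0 := by rw [hpde, mul_zero]
  -- continuity of Φ at c
  have hρcont : ContinuousAt (fun x => ρ x 0) c := by
    rw [hcdef]; exact (hρx 0).continuousAt
  have hΦcont : ContinuousAt Φ c := by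
    have cG : ContinuousAt G c := (hGA c hcs).continuousAt
    have cG1 : ContinuousAt G1 c := (hG1A c hcs).continuousAt
    have cG3 : ContinuousAt G3 c := (hG3A c hcs).continuousAt
    have cH : ContinuousAt H c := (hHA c hcs).continuousAt
    have cH1 : ContinuousAt H1 c := (hH1A c hcs).continuousAt
    have cP : ContinuousAt P c := hPcont.continuousAt
    have cT : ContinuousAt T c := by
      rw [hTdef]
      fun_prop
    rw [hΦdef]
    fun_prop
  -- Φ c = 0 via uniqueness of limits
  have hs'mem : s' ∈ nhdsWithin c {c}ᶜ := by
    rw [mem_nhdsWithin]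
    exact ⟨s, hs_open, hcs, fun y hy => hs'def ▸ ⟨hy.1, hy.2⟩⟩
  have hΦc : Φ c = 0 := by
    have l1 : Filter.Tendsto Φ (nhdsWithin c {c}ᶜ) (nhds (Φ c)) :=
      hΦcont.continuousWithinAt.tendsto
    have l2 : Filter.Tendsto Φ (nhdsWithin c {c}ᶜ) (nhds 0) := by
      refine Filter.Tendsto.congr' ?_ tendsto_const_nhds
      filter_upwards [hs'mem] with y hy
      exact (hΦ0 y hy).symm
    exact tendsto_nhds_unique l1 l2
  -- compute Φ c explicitly
  have hGc : G c = α 0 := by simp [hGdef]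
  have hG1c : G1 c = -(((k:ℂ)+1)) * α 0 := by simp [hG1def, hGc] <;> ring
  have hG2c : G2 c = ((k:ℂ)+2) * (((k:ℂ)+1) * α 0) := by
    simp [hG2def, hG1c] <;> ring
  have hG3c : G3 c = -(((k:ℂ)+3) * (((k:ℂ)+2) * (((k:ℂ)+1) * α 0))) := by
    simp [hG3def, hG2c] <;> ring
  have hHc : H c = 2*(N:ℂ) := by simp [hHdef]
  have hH1c : H1 c = -(4*(N:ℂ)) := by simp [hH1def, hHc] <;> ring
  have hTc : T c = 0 := by simp [hTdef]
  have hkey : (((k:ℂ)+1) * ((k:ℂ)+3) - 3*(N:ℂ)) * (((k:ℂ)+2) * α 0) = 0 := by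
    rw [hΦdef] at hΦc
    simp only at hΦc
    rw [hTc, hG3c, hG1c, hGc, hHc, hH1c] at hΦc
    linear_combination hΦc
  have hα0' : α 0 ≠ 0 := hα0 0
  have hk2 : ((k:ℂ)+2) ≠ 0 := by
    have h2 : ((k+2 : ℕ) : ℂ) ≠ 0 := Nat.cast_ne_zero.mpr (by omega)
    push_cast at h2
    exact h2
  have hfac : ((k:ℂ)+1) * ((k:ℂ)+3) - 3*(N:ℂ) = 0 := by
    rcases mul_eq_zero.mp hkey with h | h
    · exact h
    · exact absurd h (mul_ne_zero hk2 hα0')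
  have hfin : ((3*N : ℕ) : ℂ) = (((k+1) * (k+3) : ℕ) : ℂ) := by
    push_cast
    linear_combination -hfac
  have hfin' : 3*N = (k+1)*(k+3) := by exact_mod_cast hfin
  rw [hfin']
end

section
/- Let n, N be positive integers, let q, α be smooth functions of t with α ≠ 0, let u(x,y) = 2N(x−q)^{−2} + O(1) near x = q, and let ψ(x,y) be meromorphic in x with pole of order n at x = q: ψ = α(x−q)^{−n} + O((x−q)^{−n+1}). Suppose ∂_yψ has a pole in x of order at most n at x = q and (∂_y − ∂ₓ² + u)ψ = 0 near x = q. Then 2N = n(n+1). -/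
private lemma stmt16_aux (n N : ℕ) (t h p p1 p2 vv : ℂ) (ht : t ≠ 0) :
    t ^ 2 * h - (t ^ 2 * p2 - 2 * (n : ℂ) * t * p1 + (n : ℂ) * ((n : ℂ) + 1) * p)
      + (2 * (N : ℂ) + vv * t ^ 2) * p
    = t ^ (n + 2) *
      (h / t ^ n
        - (p2 * (t ^ n)⁻¹ - 2 * (n : ℂ) * p1 * (t ^ (n + 1))⁻¹
            + (n : ℂ) * ((n : ℂ) + 1) * p * (t ^ (n + 2))⁻¹)
        + (2 * (N : ℂ) / t ^ 2 + vv) * (p * (t ^ n)⁻¹)) := by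
  have hi1 : (t ^ n)⁻¹ = t ^ 2 / t ^ (n + 2) := by
    rw [eq_div_iff (pow_ne_zero _ ht), pow_add]
    field_simp [pow_ne_zero _ ht]
  have hi2 : (t ^ (n + 1))⁻¹ = t / t ^ (n + 2) := by
    rw [eq_div_iff (pow_ne_zero _ ht), show n + 2 = (n + 1) + 1 by ring, pow_succ, pow_succ]
    field_simp [pow_ne_zero _ ht]
    ring
  have hd1 : h / t ^ n = h * (t ^ 2 / t ^ (n + 2)) := by
    rw [div_eq_mul_inv, hi1]
  rw [hd1, hi1, hi2]
  have hT : t ^ (n + 2) ≠ 0 := pow_ne_zero _ ht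
  generalize t ^ (n + 2) = T at hT ⊢
  field_simp

set_option maxHeartbeats 1000000 in
/-- Suppose `ψ(x,y)` is meromorphic in `x` with a pole of order
`n` at `x = q(y)`: `ψ = α(y)(x−q)^{−n} + O((x−q)^{−n+1})`, and
`u(x,y) = 2N(x−q)^{−2} + O(1)`, with `q, α` smooth, `α ≠ 0`. If `∂_yψ` has a
pole in `x` of order at most `n` at `x = q(y)`, and `(∂_y − ∂ₓ² + u)ψ = 0` near
`x = q(y)`, then `2N = n(n+1)`. -/
theorem stmt16 (n N : ℕ) (hn : 0 < n) (hN : 0 < N)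
    (q α : ℝ → ℂ) (hq : ContDiff ℝ (⊤ : ℕ∞) q) (hα : ContDiff ℝ (⊤ : ℕ∞) α)
    (hα0 : ∀ y, α y ≠ 0)
    (ψ u ρ v : ℂ → ℝ → ℂ)
    -- the regular parts `ρ` (giving the `O((x−q)^{−n+1})` term of `ψ`) and `v`
    -- (of `u`) are smooth and analytic in `x` at the pole:
    (hρ : ContDiff ℝ (⊤ : ℕ∞) fun p : ℂ × ℝ => ρ p.1 p.2)
    (hρx : ∀ y, AnalyticAt ℂ (fun x => ρ x y) (q y))
    (hv : ContDiff ℝ (⊤ : ℕ∞) fun p : ℂ × ℝ => v p.1 p.2)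
    (hvx : ∀ y, AnalyticAt ℂ (fun x => v x y) (q y))
    -- Laurent expansions of `ψ` and `u` near the pole:
    (hψ : ∀ y, ∀ x ≠ q y,
      ψ x y = α y / (x - q y) ^ n + ρ x y / (x - q y) ^ (n - 1))
    (hu : ∀ y, ∀ x ≠ q y,
      u x y = 2 * (N : ℂ) / (x - q y) ^ 2 + v x y)
    -- `∂_yψ` has a pole in `x` of order at most `n` at `x = q(y)`:
    (hpole : ∃ h : ℂ → ℝ → ℂ,
      (Continuous fun p : ℂ × ℝ => h p.1 p.2) ∧
      (∀ y, AnalyticAt ℂ (fun x => h x y) (q y)) ∧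
      ∀ y, ∀ x ≠ q y, deriv (fun s => ψ x s) y = h x y / (x - q y) ^ n)
    -- the second-order Lax equation near the pole:
    (hPDE : ∀ y, ∀ x ≠ q y,
      deriv (fun s => ψ x s) y - deriv (deriv (fun w => ψ w y)) x
        + u x y * ψ x y = 0) :
    2 * N = n * (n + 1) := by
  obtain ⟨h, hhc, hhx, hhp⟩ := hpole
  obtain ⟨c, hc⟩ : ∃ c : ℂ, c = q 0 := ⟨_, rfl⟩
  obtain ⟨a, ha⟩ : ∃ a : ℂ, a = α 0 := ⟨_, rfl⟩
  obtain ⟨P, hPdef⟩ : ∃ P : ℂ → ℂ, P = fun w => a + ρ w 0 * (w - c) := ⟨_, rfl⟩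
  have hPa : AnalyticAt ℂ P c := by
    rw [hPdef, hc]
    exact analyticAt_const.add ((hρx 0).mul ((analyticAt_id).sub analyticAt_const))
  obtain ⟨s, hsP, hsO, hcs⟩ := eventually_nhds_iff.mp hPa.eventually_analyticAt
  have hPs : AnalyticOnNhd ℂ P s := fun w hw => hsP w hw
  have hP1 : AnalyticOnNhd ℂ (deriv P) s := hPs.deriv
  have hP2 : AnalyticOnNhd ℂ (deriv (deriv P)) s := hP1.deriv
  -- ψ on the punctured set equals P x * (x - c) ^ (-n)
  have hψg : ∀ x ∈ s, x ≠ c → ψ x 0 = P x * (x - c) ^ (-(n : ℤ)) := by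
    intro x _ hx
    have hxq : x ≠ q 0 := by rwa [← hc]
    have hd : x - c ≠ 0 := sub_ne_zero.mpr hx
    have hn1 : (x - c) ^ n = (x - c) ^ (n - 1) * (x - c) := by
      rw [← pow_succ, Nat.sub_add_cancel hn]
    rw [hψ 0 x hxq, hPdef, ← hc, ← ha, zpow_neg, zpow_natCast]
    field_simp
    rw [hn1]; ring
  -- first derivative
  obtain ⟨D1, hD1⟩ : ∃ D1 : ℂ → ℂ, D1 = fun w =>
      deriv P w * (w - c) ^ (-(n : ℤ))
        - (n : ℂ) * P w * (w - c) ^ (-(n : ℤ) - 1) := ⟨_, rfl⟩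
  have hgd : ∀ x ∈ s, x ≠ c →
      HasDerivAt (fun w => P w * (w - c) ^ (-(n : ℤ))) (D1 x) x := by
    intro x hxs hx
    have hd : x - c ≠ 0 := sub_ne_zero.mpr hx
    have h1 : HasDerivAt P (deriv P x) x := (hPs x hxs).differentiableAt.hasDerivAt
    have h2 : HasDerivAt (fun w : ℂ => (w - c) ^ (-(n : ℤ)))
        (((-(n : ℤ) : ℤ) : ℂ) * (x - c) ^ (-(n : ℤ) - 1)) x := by
      have := (hasDerivAt_zpow (-(n : ℤ)) (x - c) (Or.inl hd)).comp x
        ((hasDerivAt_id x).sub_const c)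
      simpa [Function.comp_def] using this
    have h12 := h1.mul h2
    rw [hD1]
    refine h12.congr_deriv ?_
    push_cast
    ring
  -- second derivative
  obtain ⟨D2, hD2⟩ : ∃ D2 : ℂ → ℂ, D2 = fun w =>
      deriv (deriv P) w * (w - c) ^ (-(n : ℤ))
        - 2 * (n : ℂ) * deriv P w * (w - c) ^ (-(n : ℤ) - 1)
        + (n : ℂ) * ((n : ℂ) + 1) * P w * (w - c) ^ (-(n : ℤ) - 2) := ⟨_, rfl⟩
  have hD1d : ∀ x ∈ s, x ≠ c → HasDerivAt D1 (D2 x) x := by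
    intro x hxs hx
    have hd : x - c ≠ 0 := sub_ne_zero.mpr hx
    have h1 : HasDerivAt P (deriv P x) x := (hPs x hxs).differentiableAt.hasDerivAt
    have h1' : HasDerivAt (deriv P) (deriv (deriv P) x) x :=
      (hP1 x hxs).differentiableAt.hasDerivAt
    have h2 : HasDerivAt (fun w : ℂ => (w - c) ^ (-(n : ℤ)))
        (((-(n : ℤ) : ℤ) : ℂ) * (x - c) ^ (-(n : ℤ) - 1)) x := by
      have := (hasDerivAt_zpow (-(n : ℤ)) (x - c) (Or.inl hd)).comp x
        ((hasDerivAt_id x).sub_const c)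
      simpa [Function.comp_def] using this
    have h3 : HasDerivAt (fun w : ℂ => (w - c) ^ (-(n : ℤ) - 1))
        (((-(n : ℤ) - 1 : ℤ) : ℂ) * (x - c) ^ (-(n : ℤ) - 2)) x := by
      have := (hasDerivAt_zpow (-(n : ℤ) - 1) (x - c) (Or.inl hd)).comp x
        ((hasDerivAt_id x).sub_const c)
      rw [show (-(n : ℤ) - 1 - 1 : ℤ) = -(n : ℤ) - 2 by ring] at this
      simpa [Function.comp_def] using this
    have hA := h1'.mul h2
    have hB := (h1.mul h3).const_mul ((n : ℂ))
    have hAB := hA.sub hB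
    rw [hD1, hD2]
    have heq : (fun w => deriv P w * (w - c) ^ (-(n : ℤ))
          - (n : ℂ) * P w * (w - c) ^ (-(n : ℤ) - 1))
        = fun w => deriv P w * (w - c) ^ (-(n : ℤ))
          - (n : ℂ) * (P w * (w - c) ^ (-(n : ℤ) - 1)) := by
      funext w; ring
    rw [heq]
    refine hAB.congr_deriv ?_
    push_cast
    ring
  -- the second x-derivative of ψ equals D2 on the punctured set
  have hψ2 : ∀ x ∈ s, x ≠ c → deriv (deriv (fun w => ψ w 0)) x = D2 x := by
    intro x hxs hx
    have hOpen : IsOpen (s \ {c}) := hsO.sdiff isClosed_singleton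
    have hmem : s \ {c} ∈ nhds x := hOpen.mem_nhds ⟨hxs, hx⟩
    have hEq1 : (fun w => ψ w 0) =ᶠ[nhds x] fun w => P w * (w - c) ^ (-(n : ℤ)) := by
      filter_upwards [hmem] with w hw
      exact hψg w hw.1 hw.2
    have hEq2 : deriv (fun w => ψ w 0) =ᶠ[nhds x] D1 := by
      filter_upwards [hEq1.deriv, hmem] with w hw1 hw2
      rw [hw1, (hgd w hw2.1 hw2.2).deriv]
    rw [hEq2.deriv_eq, (hD1d x hxs hx).deriv]
  -- the combined function E
  obtain ⟨E, hE⟩ : ∃ E : ℂ → ℂ, E = fun x =>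
      (x - c) ^ 2 * h x 0
        - ((x - c) ^ 2 * deriv (deriv P) x - 2 * (n : ℂ) * (x - c) * deriv P x
            + (n : ℂ) * ((n : ℂ) + 1) * P x)
        + (2 * (N : ℂ) + v x 0 * (x - c) ^ 2) * P x := ⟨_, rfl⟩
  have hE0 : ∀ᶠ x in nhdsWithin c {c}ᶜ, E x = 0 := by
    have hmem : s \ {c} ∈ nhdsWithin c {c}ᶜ := by
      rw [mem_nhdsWithin]
      exact ⟨s, hsO, hcs, fun w hw => ⟨hw.1, hw.2⟩⟩
    filter_upwards [hmem] with x hx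
    obtain ⟨hxs, hxc⟩ := hx
    have hxc' : x ≠ c := hxc
    have hxq : x ≠ q 0 := by rwa [← hc]
    have hd : x - c ≠ 0 := sub_ne_zero.mpr hxc'
    have hpde := hPDE 0 x hxq
    rw [hhp 0 x hxq, hu 0 x hxq, ← hc] at hpde
    rw [hψ2 x hxs hxc', hψg x hxs hxc'] at hpde
    have ezn : (x - c) ^ (-(n : ℤ)) = ((x - c) ^ n)⁻¹ := by
      rw [zpow_neg, zpow_natCast]
    have ezn1 : (x - c) ^ (-(n : ℤ) - 1) = ((x - c) ^ (n + 1))⁻¹ := by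
      rw [show (-(n : ℤ) - 1) = -((n : ℤ) + 1) by ring, zpow_neg]
      norm_cast
    have ezn2 : (x - c) ^ (-(n : ℤ) - 2) = ((x - c) ^ (n + 2))⁻¹ := by
      rw [show (-(n : ℤ) - 2) = -((n : ℤ) + 2) by ring, zpow_neg]
      norm_cast
    simp only [hD2] at hpde
    rw [ezn, ezn1, ezn2] at hpde
    have key := stmt16_aux n N (x - c) (h x 0) (P x) (deriv P x)
      (deriv (deriv P) x) (v x 0) hd
    rw [hE]
    simp only at key hpde ⊢
    rw [key, hpde, mul_zero]
  -- limit of E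
  have hPc : P c = a := by simp [hPdef]
  have hhcont : ContinuousAt (fun x => h x 0) c := by rw [hc]; exact (hhx 0).continuousAt
  have hvcont : ContinuousAt (fun x => v x 0) c := by rw [hc]; exact (hvx 0).continuousAt
  have hP0c : ContinuousAt P c := hPa.continuousAt
  have hP1c : ContinuousAt (deriv P) c := (hP1 c hcs).continuousAt
  have hP2c : ContinuousAt (deriv (deriv P)) c := (hP2 c hcs).continuousAt
  have hEL : Filter.Tendsto E (nhdsWithin c {c}ᶜ)
      (nhds ((2 * N : ℂ) * a - (n : ℂ) * ((n : ℂ) + 1) * a)) := by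
    have hT : Filter.Tendsto E (nhds c)
        (nhds ((c - c) ^ 2 * h c 0
          - ((c - c) ^ 2 * deriv (deriv P) c - 2 * (n : ℂ) * (c - c) * deriv P c
              + (n : ℂ) * ((n : ℂ) + 1) * P c)
          + (2 * (N : ℂ) + v c 0 * (c - c) ^ 2) * P c)) := by
      rw [hE]
      apply Filter.Tendsto.add
      apply Filter.Tendsto.sub
      · exact ((continuousAt_id.sub continuousAt_const).pow 2).mul hhcont
      · apply Filter.Tendsto.add
        apply Filter.Tendsto.sub
        · exact ((continuousAt_id.sub continuousAt_const).pow 2).mul hP2c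
        · exact (continuousAt_const.mul (continuousAt_id.sub continuousAt_const)).mul hP1c
        · exact continuousAt_const.mul hP0c
      · exact (continuousAt_const.add (hvcont.mul
          ((continuousAt_id.sub continuousAt_const).pow 2))).mul hP0c
    have heq : ((c - c) ^ 2 * h c 0
          - ((c - c) ^ 2 * deriv (deriv P) c - 2 * (n : ℂ) * (c - c) * deriv P c
              + (n : ℂ) * ((n : ℂ) + 1) * P c)
          + (2 * (N : ℂ) + v c 0 * (c - c) ^ 2) * P c)
        = (2 * N : ℂ) * a - (n : ℂ) * ((n : ℂ) + 1) * a := by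
      rw [hPc]; ring
    rw [heq] at hT
    exact hT.mono_left nhdsWithin_le_nhds
  have hzero : Filter.Tendsto E (nhdsWithin c {c}ᶜ) (nhds 0) :=
    Filter.Tendsto.congr' (Filter.EventuallyEq.symm hE0) tendsto_const_nhds
  have hlim : (2 * N : ℂ) * a - (n : ℂ) * ((n : ℂ) + 1) * a = 0 :=
    tendsto_nhds_unique hEL hzero
  have ha0 : a ≠ 0 := by rw [ha]; exact hα0 0
  have hfin : (2 * N : ℂ) = (n : ℂ) * ((n : ℂ) + 1) := by
    have h2 := sub_eq_zero.mp hlim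
    exact mul_right_cancel₀ ha0 h2
  exact_mod_cast hfin
end

section
/- Let B be a complex symmetric g×g matrix with positive definite imaginary part, θ(z) = θ(z|B) the Riemann theta function, and for a half-integer characteristic ε ∈ ((1/2)ℤ/ℤ)^g define Θ[ε,0](z) = Σ_{m ∈ ℤ^g} exp(4πi(z, m+ε) + 2πi(B(m+ε), m+ε)). Then for all z, w ∈ ℂ^g: θ(z+w)·θ(z−w) = Σ_{ε ∈ ((1/2)ℤ/ℤ)^g} Θ[ε,0](z)·Θ[ε,0](w). -/
open Complex

/-- The Riemann theta function `θ(z|B) = Σ_{m ∈ ℤ^g} exp(2πi(z,m) + πi(Bm,m))`. -/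
noncomputable def riemannTheta (g : ℕ) (B : Matrix (Fin g) (Fin g) ℂ)
    (z : Fin g → ℂ) : ℂ :=
  ∑' m : Fin g → ℤ,
    Complex.exp (2 * Real.pi * I * (∑ j, z j * (m j : ℂ)) +
      Real.pi * I * (∑ i, ∑ j, B i j * (m i : ℂ) * (m j : ℂ)))

/-- The level-two theta function with half-integer characteristic
`ε = δ/2`, `δ ∈ {0,1}^g`:
`Θ[ε,0](z) = Σ_{m ∈ ℤ^g} exp(4πi(z, m+ε) + 2πi(B(m+ε), m+ε))`. -/
noncomputable def thetaChar (g : ℕ) (B : Matrix (Fin g) (Fin g) ℂ)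
    (δ : Fin g → Fin 2) (z : Fin g → ℂ) : ℂ :=
  ∑' m : Fin g → ℤ,
    Complex.exp (4 * Real.pi * I * (∑ j, z j * ((m j : ℂ) + ((δ j : ℕ) : ℂ) / 2)) +
      2 * Real.pi * I *
        (∑ i, ∑ j, B i j * ((m i : ℂ) + ((δ i : ℕ) : ℂ) / 2) *
          ((m j : ℂ) + ((δ j : ℕ) : ℂ) / 2)))

open Matrix



lemma posdef_quad_bound {g : ℕ} (Y : Matrix (Fin g) (Fin g) ℝ) (hY : Y.PosDef) :
    ∃ c > 0, ∀ x : Fin g → ℝ, c * (∑ j, x j ^ 2) ≤ ∑ i, ∑ j, Y i j * x i * x j := by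
  have hQ : ∀ x : Fin g → ℝ, x ⬝ᵥ Y.mulVec x = ∑ i, ∑ j, Y i j * x i * x j := by
    intro x
    simp only [dotProduct, Matrix.mulVec, Finset.mul_sum]
    exact Finset.sum_congr rfl fun i _ => Finset.sum_congr rfl fun j _ => by ring
  have hQpos : ∀ x : Fin g → ℝ, x ≠ 0 → 0 < ∑ i, ∑ j, Y i j * x i * x j := by
    intro x hx
    have h := hY.dotProduct_mulVec_pos hx
    have hstar : star x = x := funext fun i => star_trivial _
    rw [hstar, hQ x] at h
    simpa using h
  have hscale : ∀ (t : ℝ) (x : Fin g → ℝ),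
      (∑ i, ∑ j, Y i j * (t * x i) * (t * x j)) = t ^ 2 * ∑ i, ∑ j, Y i j * x i * x j := by
    intro t x
    rw [Finset.mul_sum]
    exact Finset.sum_congr rfl fun i _ => by
      rw [Finset.mul_sum]; exact Finset.sum_congr rfl fun j _ => by ring
  by_cases hall : ∀ x : Fin g → ℝ, x = 0
  · exact ⟨1, one_pos, fun x => by rw [hall x]; simp⟩
  push_neg at hall
  obtain ⟨x₀, hx₀⟩ := hall
  set S : Set (Fin g → ℝ) := {x | ∑ j, x j ^ 2 = 1} with hS
  have hcont : Continuous fun x : Fin g → ℝ => ∑ j, x j ^ 2 := by fun_prop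
  have hcontQ : Continuous fun x : Fin g → ℝ => ∑ i, ∑ j, Y i j * x i * x j := by fun_prop
  have hScompact : IsCompact S := by
    have hclosed : IsClosed S := isClosed_eq hcont continuous_const
    have hsub : S ⊆ Metric.closedBall 0 1 := by
      intro x hx
      rw [Metric.mem_closedBall, dist_zero_right,
        pi_norm_le_iff_of_nonneg zero_le_one]
      intro i
      have hx' : ∑ j, x j ^ 2 = 1 := hx
      have h1 : x i ^ 2 ≤ 1 := by
        have h2 := Finset.single_le_sum (f := fun j => x j ^ 2)
          (fun j _ => sq_nonneg _) (Finset.mem_univ i)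
        linarith
      rw [Real.norm_eq_abs, abs_le]
      constructor <;> nlinarith
    exact (isCompact_closedBall (0 : Fin g → ℝ) 1).of_isClosed_subset hclosed hsub
  have hSne : S.Nonempty := by
    obtain ⟨j₀, hj₀⟩ : ∃ j, x₀ j ≠ 0 := by
      by_contra hno; push_neg at hno; exact hx₀ (funext fun j => hno j)
    have hpos0 : 0 < ∑ j, x₀ j ^ 2 :=
      Finset.sum_pos' (fun j _ => sq_nonneg _)
        ⟨j₀, Finset.mem_univ j₀, by positivity⟩
    refine ⟨fun j => (Real.sqrt (∑ j, x₀ j ^ 2))⁻¹ * x₀ j, ?_⟩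
    have hsq : Real.sqrt (∑ j, x₀ j ^ 2) ^ 2 = ∑ j, x₀ j ^ 2 :=
      Real.sq_sqrt hpos0.le
    have hsqpos : 0 < Real.sqrt (∑ j, x₀ j ^ 2) := Real.sqrt_pos.2 hpos0
    show (∑ j, ((Real.sqrt (∑ j, x₀ j ^ 2))⁻¹ * x₀ j) ^ 2) = 1
    have : ∀ j, ((Real.sqrt (∑ j, x₀ j ^ 2))⁻¹ * x₀ j) ^ 2
        = (Real.sqrt (∑ j, x₀ j ^ 2))⁻¹ ^ 2 * x₀ j ^ 2 := fun j => by ring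
    rw [Finset.sum_congr rfl fun j _ => this j, ← Finset.mul_sum]
    field_simp
    exact hsq.symm
  obtain ⟨y₀, hy₀S, hy₀min'⟩ := hScompact.exists_isMinOn hSne hcontQ.continuousOn
  have hy₀min : ∀ x ∈ S, (∑ i, ∑ j, Y i j * y₀ i * y₀ j) ≤ ∑ i, ∑ j, Y i j * x i * x j := fun x hx => hy₀min' hx
  set c := ∑ i, ∑ j, Y i j * y₀ i * y₀ j with hc
  have hy₀ne : y₀ ≠ 0 := by
    intro h
    have : (∑ j, y₀ j ^ 2) = 1 := hy₀S
    rw [h] at this; simp at this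
  refine ⟨c, hQpos y₀ hy₀ne, fun x => ?_⟩
  by_cases hx : x = 0
  · rw [hx]; simp
  · have hpos0 : 0 < ∑ j, x j ^ 2 := by
      obtain ⟨j₀, hj₀⟩ : ∃ j, x j ≠ 0 := by
        by_contra hno; push_neg at hno; exact hx (funext fun j => hno j)
      exact Finset.sum_pos' (fun j _ => sq_nonneg _)
        ⟨j₀, Finset.mem_univ j₀, by positivity⟩
    set r := Real.sqrt (∑ j, x j ^ 2) with hr
    have hrpos : 0 < r := Real.sqrt_pos.2 hpos0
    have hr2 : r ^ 2 = ∑ j, x j ^ 2 := Real.sq_sqrt hpos0.le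
    have hyS : (fun j => r⁻¹ * x j) ∈ S := by
      show (∑ j, (r⁻¹ * x j) ^ 2) = 1
      have : ∀ j, (r⁻¹ * x j) ^ 2 = r⁻¹ ^ 2 * x j ^ 2 := fun j => by ring
      rw [Finset.sum_congr rfl fun j _ => this j, ← Finset.mul_sum, ← hr2]
      field_simp
    have hmin := hy₀min _ hyS
    have := hscale r⁻¹ x
    rw [this] at hmin
    have h4 : c ≤ r⁻¹ ^ 2 * ∑ i, ∑ j, Y i j * x i * x j := hmin
    have h5 : c * r ^ 2 ≤ ∑ i, ∑ j, Y i j * x i * x j := by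
      have := mul_le_mul_of_nonneg_right h4 (sq_nonneg r)
      calc c * r ^ 2 ≤ r⁻¹ ^ 2 * (∑ i, ∑ j, Y i j * x i * x j) * r ^ 2 := by
            linarith [this]
        _ = ∑ i, ∑ j, Y i j * x i * x j := by
            field_simp
    rw [← hr2]; linarith


lemma summable_exp_int (μ C : ℝ) (hμ : 0 < μ) :
    Summable fun k : ℤ => Real.exp (C * |(k : ℝ)| - μ * (k : ℝ) ^ 2) := by
  set D := (C + 1) ^ 2 / (4 * μ) with hD
  have key : ∀ k : ℤ, Real.exp (C * |(k : ℝ)| - μ * (k : ℝ) ^ 2)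
      ≤ Real.exp D * Real.exp (-1) ^ k.natAbs := by
    intro k
    have habs : |(k : ℝ)| = (k.natAbs : ℝ) := by
      rw [← Int.cast_abs, Int.abs_eq_natAbs, Int.cast_natCast]
    have hsq : (k : ℝ) ^ 2 = (k.natAbs : ℝ) ^ 2 := by
      rw [← _root_.sq_abs (k:ℝ), habs]
    rw [← Real.exp_nat_mul, ← Real.exp_add, Real.exp_le_exp, habs, hsq]
    set n : ℝ := (k.natAbs : ℝ)
    have h : 0 ≤ μ * n ^ 2 - (C + 1) * n + D := by
      have h2 : D * (4 * μ) = (C + 1) ^ 2 := by rw [hD]; field_simp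
      nlinarith [sq_nonneg (2 * μ * n - (C + 1)), hμ]
    nlinarith
  refine Summable.of_nonneg_of_le (fun k => (Real.exp_pos _).le) key ?_
  have hgeom : Summable fun n : ℕ => Real.exp D * Real.exp (-1) ^ n :=
    (summable_geometric_of_lt_one (by positivity)
      (by rw [Real.exp_lt_one_iff]; norm_num)).mul_left _
  refine Summable.of_nat_of_neg ?_ ?_ <;> · simpa using hgeom


set_option maxHeartbeats 800000 in
lemma summable_pi_prod : ∀ {g : ℕ} (f : Fin g → ℤ → ℝ), (∀ j, Summable (f j)) →
    (∀ j k, 0 ≤ f j k) → Summable fun m : Fin g → ℤ => ∏ j, f j (m j) := by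
  intro g
  induction g with
  | zero =>
    intro f _ _
    haveI : Finite (Fin 0 → ℤ) := by
      haveI : IsEmpty (Fin 0) := inferInstance
      infer_instance
    exact Summable.of_finite
  | succ n ih =>
    intro f hf hnn
    have hg : Summable fun m : Fin n → ℤ => ∏ j, f j.succ (m j) :=
      ih (fun j => f j.succ) (fun j => hf _) (fun j k => hnn _ _)
    have hnn1 : (0 : ℤ → ℝ) ≤ f 0 := fun k => hnn 0 k
    have hnn2 : (0 : (Fin n → ℤ) → ℝ) ≤ fun m : Fin n → ℤ => ∏ j, f j.succ (m j) :=
      fun m => Finset.prod_nonneg fun j _ => hnn _ _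
    have h2 := Summable.mul_of_nonneg (hf 0) hg hnn1 hnn2
    apply ((Fin.consEquiv (fun _ : Fin (n+1) => ℤ)).summable_iff).mp
    refine h2.congr fun p => ?_
    simp only [Function.comp_apply, Fin.consEquiv_apply]
    rw [Fin.prod_univ_succ]
    simp [Fin.cons_succ]


lemma re_term {g : ℕ} (B : Matrix (Fin g) (Fin g) ℂ) (t : ℝ) (y : Fin g → ℂ)
    (e : Fin g → ℝ) (m : Fin g → ℤ) :
    ((2 * (t:ℂ)) * Real.pi * I * (∑ j, y j * ((m j : ℂ) + ((e j : ℝ) : ℂ))) +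
      (t:ℂ) * Real.pi * I * (∑ i, ∑ j, B i j * ((m i : ℂ) + ((e i : ℝ):ℂ)) *
        ((m j : ℂ) + ((e j : ℝ):ℂ)))).re
    = -(2 * t * Real.pi) * (∑ j, (y j).im * ((m j : ℝ) + e j))
      - t * Real.pi * (∑ i, ∑ j, (B i j).im * ((m i : ℝ) + e i) * ((m j : ℝ) + e j)) := by
  have h1 : ∀ j, ((m j : ℂ) + ((e j : ℝ):ℂ)) = (((m j : ℝ) + e j : ℝ) : ℂ) := by
    intro j; push_cast; ring
  simp only [h1]
  rw [Complex.add_re]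
  have hS : (∑ j, y j * (((m j : ℝ) + e j : ℝ) : ℂ)).im
      = ∑ j, (y j).im * ((m j : ℝ) + e j) := by
    rw [Complex.im_sum]
    exact Finset.sum_congr rfl fun j _ => by
      simp [Complex.mul_im]
  have hT : (∑ i, ∑ j, B i j * (((m i : ℝ) + e i : ℝ):ℂ) * (((m j : ℝ) + e j : ℝ):ℂ)).im
      = ∑ i, ∑ j, (B i j).im * ((m i : ℝ) + e i) * ((m j : ℝ) + e j) := by
    rw [Complex.im_sum]
    refine Finset.sum_congr rfl fun i _ => ?_
    rw [Complex.im_sum]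
    exact Finset.sum_congr rfl fun j _ => by
      simp [Complex.mul_im, Complex.mul_re]
  have key : ∀ (r : ℝ) (S : ℂ), ((r:ℂ) * I * S).re = -r * S.im := by
    intro r S; simp [Complex.mul_re, Complex.mul_im]
  have e1 : ((2 * (t:ℂ)) * Real.pi * I * (∑ j, y j * (((m j : ℝ) + e j : ℝ):ℂ))).re
      = -(2 * t * Real.pi) * (∑ j, (y j).im * ((m j : ℝ) + e j)) := by
    rw [show (2 * (t:ℂ)) * Real.pi * I = ((2 * t * Real.pi : ℝ) : ℂ) * I by push_cast; ring,
      key, hS]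
  have e2 : ((t:ℂ) * Real.pi * I * (∑ i, ∑ j, B i j * (((m i : ℝ) + e i : ℝ):ℂ) *
        (((m j : ℝ) + e j : ℝ):ℂ))).re
      = - (t * Real.pi) * (∑ i, ∑ j, (B i j).im * ((m i : ℝ) + e i) * ((m j : ℝ) + e j)) := by
    rw [show (t:ℂ) * Real.pi * I = ((t * Real.pi : ℝ) : ℂ) * I by push_cast; ring,
      key, hT]
  rw [e1, e2]; ring


lemma key_term {g : ℕ} (B : Matrix (Fin g) (Fin g) ℂ) (z w : Fin g → ℂ)
    (δ : Fin g → Fin 2) (a b : Fin g → ℤ) :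
    Complex.exp (2 * Real.pi * I *
        (∑ j, (z j + w j) * (((a j + b j + ((δ j : ℕ) : ℤ) : ℤ)) : ℂ)) +
      Real.pi * I * (∑ i, ∑ j, B i j * (((a i + b i + ((δ i : ℕ) : ℤ) : ℤ)) : ℂ) *
        (((a j + b j + ((δ j : ℕ) : ℤ) : ℤ)) : ℂ))) *
    Complex.exp (2 * Real.pi * I * (∑ j, (z j - w j) * (((a j - b j : ℤ)) : ℂ)) +
      Real.pi * I * (∑ i, ∑ j, B i j * (((a i - b i : ℤ)) : ℂ) * (((a j - b j : ℤ)) : ℂ))) =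
    Complex.exp (4 * Real.pi * I * (∑ j, z j * ((a j : ℂ) + ((δ j : ℕ) : ℂ) / 2)) +
      2 * Real.pi * I * (∑ i, ∑ j, B i j * ((a i : ℂ) + ((δ i : ℕ) : ℂ) / 2) *
        ((a j : ℂ) + ((δ j : ℕ) : ℂ) / 2))) *
    Complex.exp (4 * Real.pi * I * (∑ j, w j * ((b j : ℂ) + ((δ j : ℕ) : ℂ) / 2)) +
      2 * Real.pi * I * (∑ i, ∑ j, B i j * ((b i : ℂ) + ((δ i : ℕ) : ℂ) / 2) *
        ((b j : ℂ) + ((δ j : ℕ) : ℂ) / 2))) := by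
  rw [← Complex.exp_add, ← Complex.exp_add]
  congr 1
  have h1 : (∑ j, (z j + w j) * (((a j + b j + ((δ j : ℕ) : ℤ) : ℤ)) : ℂ)) +
      (∑ j, (z j - w j) * (((a j - b j : ℤ)) : ℂ))
      = 2 * (∑ j, z j * ((a j : ℂ) + ((δ j : ℕ) : ℂ) / 2)) +
        2 * (∑ j, w j * ((b j : ℂ) + ((δ j : ℕ) : ℂ) / 2)) := by
    rw [← Finset.sum_add_distrib, Finset.mul_sum, Finset.mul_sum, ← Finset.sum_add_distrib]
    refine Finset.sum_congr rfl fun j _ => ?_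
    push_cast
    ring
  have h2 : (∑ i, ∑ j, B i j * (((a i + b i + ((δ i : ℕ) : ℤ) : ℤ)) : ℂ) *
        (((a j + b j + ((δ j : ℕ) : ℤ) : ℤ)) : ℂ)) +
      (∑ i, ∑ j, B i j * (((a i - b i : ℤ)) : ℂ) * (((a j - b j : ℤ)) : ℂ))
      = 2 * (∑ i, ∑ j, B i j * ((a i : ℂ) + ((δ i : ℕ) : ℂ) / 2) *
          ((a j : ℂ) + ((δ j : ℕ) : ℂ) / 2)) +
        2 * (∑ i, ∑ j, B i j * ((b i : ℂ) + ((δ i : ℕ) : ℂ) / 2) *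
          ((b j : ℂ) + ((δ j : ℕ) : ℂ) / 2)) := by
    rw [← Finset.sum_add_distrib, Finset.mul_sum, Finset.mul_sum, ← Finset.sum_add_distrib]
    refine Finset.sum_congr rfl fun i _ => ?_
    rw [← Finset.sum_add_distrib, Finset.mul_sum, Finset.mul_sum, ← Finset.sum_add_distrib]
    refine Finset.sum_congr rfl fun j _ => ?_
    push_cast
    ring
  linear_combination (2 * (Real.pi : ℂ) * I) * h1 + ((Real.pi : ℂ) * I) * h2


def pairEquiv (g : ℕ) : ((Fin g → Fin 2) × ((Fin g → ℤ) × (Fin g → ℤ))) ≃ ((Fin g → ℤ) × (Fin g → ℤ)) where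
  toFun q := (fun j => q.2.1 j + q.2.2 j + ((q.1 j : ℕ) : ℤ), fun j => q.2.1 j - q.2.2 j)
  invFun p := (fun j => if Even (p.1 j + p.2 j) then 0 else 1,
    (fun j => (p.1 j + p.2 j - (if Even (p.1 j + p.2 j) then (0:ℤ) else 1)) / 2,
     fun j => (p.1 j - p.2 j - (if Even (p.1 j + p.2 j) then (0:ℤ) else 1)) / 2))
  left_inv := by
    rintro ⟨δ, a, b⟩
    have hd : ∀ j, ((δ j : ℕ) : ℤ) = 0 ∨ ((δ j : ℕ) : ℤ) = 1 := by
      intro j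
      have := (δ j).isLt
      omega
    have hpar : ∀ j, (Even (a j + b j + ((δ j : ℕ) : ℤ) + (a j - b j)) ↔ ((δ j : ℕ) : ℤ) = 0) := by
      intro j
      rcases hd j with h | h <;> rw [h] <;> constructor <;> intro hh
      · rfl
      · exact ⟨a j, by ring⟩
      · exfalso; rw [Int.even_iff] at hh; omega
      · exact absurd hh one_ne_zero
    simp only [Prod.mk.injEq]
    refine ⟨funext fun j => ?_, funext fun j => ?_, funext fun j => ?_⟩
    · rcases hd j with h | h
      · rw [if_pos ((hpar j).2 h)]
        have : (δ j : ℕ) = 0 := by omega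
        exact (Fin.ext this.symm : (0:Fin 2) = δ j)
      · rw [if_neg (fun hh => by rw [(hpar j).1 hh] at h; norm_num at h)]
        have : (δ j : ℕ) = 1 := by omega
        exact (Fin.ext this.symm : (1:Fin 2) = δ j)
    · rcases hd j with h | h
      · rw [if_pos ((hpar j).2 h)]; omega
      · rw [if_neg (fun hh => by rw [(hpar j).1 hh] at h; norm_num at h)]; omega
    · rcases hd j with h | h
      · rw [if_pos ((hpar j).2 h)]; omega
      · rw [if_neg (fun hh => by rw [(hpar j).1 hh] at h; norm_num at h)]; omega
  right_inv := by
    rintro ⟨m, n⟩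
    simp only [Prod.mk.injEq]
    constructor <;> funext j <;> by_cases h : Even (m j + n j)
    · rw [if_pos h, if_pos h]
      simp only [Fin.val_zero, Int.ofNat_zero]
      rw [Int.even_iff] at h; push_cast; omega
    · rw [if_neg h, if_neg h]
      simp only [Fin.val_one]
      rw [Int.even_iff] at h; push_cast; omega
    · rw [if_pos h]
      rw [Int.even_iff] at h; omega
    · rw [if_neg h]
      rw [Int.even_iff] at h; omega



lemma summable_norm_term {g : ℕ} (B : Matrix (Fin g) (Fin g) ℂ) (c : ℝ) (hc : 0 < c)
    (hquad : ∀ x : Fin g → ℝ, c * (∑ j, x j ^ 2) ≤ ∑ i, ∑ j, (B i j).im * x i * x j)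
    (t : ℝ) (ht : 0 < t) (y : Fin g → ℂ) (e : Fin g → ℝ) :
    Summable fun m : Fin g → ℤ =>
      ‖Complex.exp ((2 * (t:ℂ)) * Real.pi * I * (∑ j, y j * ((m j : ℂ) + ((e j : ℝ) : ℂ))) +
        (t:ℂ) * Real.pi * I * (∑ i, ∑ j, B i j * ((m i : ℂ) + ((e i : ℝ):ℂ)) *
          ((m j : ℂ) + ((e j : ℝ):ℂ))))‖ := by
  set π := Real.pi with hπ
  have hπpos : 0 < π := Real.pi_pos
  set μ := t * π * c / 2 with hμ
  have hμpos : 0 < μ := by positivity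
  set v : Fin g → ℝ := fun j => 2 * t * π * |(y j).im| with hv
  set K : Fin g → ℝ := fun j => v j * |e j| + t * π * c * e j ^ 2 with hK
  -- the majorant
  set f : Fin g → ℤ → ℝ := fun j k => Real.exp (v j * |(k:ℝ)| - μ * (k:ℝ)^2 + K j) with hf
  have hfsum : ∀ j, Summable (f j) := by
    intro j
    have := (summable_exp_int μ (v j) hμpos).mul_right (Real.exp (K j))
    refine this.congr fun k => ?_
    rw [← Real.exp_add]
  have hsumG : Summable fun m : Fin g → ℤ => ∏ j, f j (m j) :=
    summable_pi_prod f hfsum (fun j k => (Real.exp_pos _).le)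
  refine Summable.of_nonneg_of_le (fun m => norm_nonneg _) (fun m => ?_) hsumG
  rw [Complex.norm_exp, re_term]
  have hprod : ∏ j, f j (m j) = Real.exp (∑ j, (v j * |(m j : ℝ)| - μ * (m j:ℝ)^2 + K j)) := by
    rw [Real.exp_sum]
  rw [hprod, Real.exp_le_exp]
  -- pointwise exponent bound
  have hquad' := hquad (fun j => (m j : ℝ) + e j)
  have hQle : t * π * (c * ∑ j, ((m j:ℝ) + e j) ^ 2)
      ≤ t * π * ∑ i, ∑ j, (B i j).im * ((m i:ℝ) + e i) * ((m j:ℝ) + e j) :=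
    mul_le_mul_of_nonneg_left hquad' (by positivity)
  have main : -(2 * t * π) * (∑ j, (y j).im * ((m j:ℝ) + e j))
      - t * π * (c * ∑ j, ((m j:ℝ) + e j) ^ 2)
      ≤ ∑ j, (v j * |(m j : ℝ)| - μ * (m j:ℝ)^2 + K j) := by
    have hLHS : -(2 * t * π) * (∑ j, (y j).im * ((m j:ℝ) + e j))
        - t * π * (c * ∑ j, ((m j:ℝ) + e j) ^ 2)
        = ∑ j, (-(2 * t * π) * ((y j).im * ((m j:ℝ) + e j))
            - t * π * (c * ((m j:ℝ) + e j) ^ 2)) := by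
      simp only [Finset.sum_sub_distrib, ← Finset.mul_sum]
    rw [hLHS]
    refine Finset.sum_le_sum fun j _ => ?_
    have h1 : -(|(y j).im| * |(m j:ℝ) + e j|) ≤ (y j).im * ((m j:ℝ) + e j) := by
      rw [← abs_mul]; exact neg_abs_le _
    have h2 : |(m j:ℝ) + e j| ≤ |(m j:ℝ)| + |e j| := abs_add_le _ _
    have h3 : 0 ≤ |(y j).im| := abs_nonneg _
    have h4 : ((m j:ℝ))^2 / 2 - e j ^ 2 ≤ ((m j:ℝ) + e j) ^ 2 := by nlinarith [sq_nonneg ((m j:ℝ) + 2 * e j)]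
    have h5 : 0 ≤ |(m j:ℝ)| := abs_nonneg _
    have h6 : 0 ≤ |e j| := abs_nonneg _
    have he : e j ≤ |e j| := le_abs_self _
    have he' : -|e j| ≤ e j := neg_abs_le _
    simp only [hv, hμ, hK]
    nlinarith [mul_le_mul_of_nonneg_left h2 h3, mul_pos (mul_pos ht hπpos) hc,
      mul_pos ht hπpos, sq_nonneg (e j)]
  linarith [hQle, main]


noncomputable def thTerm {g : ℕ} (B : Matrix (Fin g) (Fin g) ℂ) (y : Fin g → ℂ)
    (m : Fin g → ℤ) : ℂ :=
  Complex.exp (2 * Real.pi * I * (∑ j, y j * (m j : ℂ)) +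
    Real.pi * I * (∑ i, ∑ j, B i j * (m i : ℂ) * (m j : ℂ)))

noncomputable def chTerm {g : ℕ} (B : Matrix (Fin g) (Fin g) ℂ) (δ : Fin g → Fin 2)
    (y : Fin g → ℂ) (m : Fin g → ℤ) : ℂ :=
  Complex.exp (4 * Real.pi * I * (∑ j, y j * ((m j : ℂ) + ((δ j : ℕ) : ℂ) / 2)) +
    2 * Real.pi * I *
      (∑ i, ∑ j, B i j * ((m i : ℂ) + ((δ i : ℕ) : ℂ) / 2) *
        ((m j : ℂ) + ((δ j : ℕ) : ℂ) / 2)))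


set_option maxHeartbeats 1000000 in
/-- the level-two addition theorem for Riemann theta functions:
`θ(z+w)·θ(z−w) = Σ_{ε ∈ ((1/2)ℤ/ℤ)^g} Θ[ε,0](z)·Θ[ε,0](w)`. -/
theorem stmt19 (g : ℕ) (B : Matrix (Fin g) (Fin g) ℂ)
    (hsym : B.IsSymm)
    (hpos : (Matrix.of fun i j => (B i j).im).PosDef) :
    ∀ z w : Fin g → ℂ,
      riemannTheta g B (z + w) * riemannTheta g B (z - w) =
        ∑ δ : Fin g → Fin 2, thetaChar g B δ z * thetaChar g B δ w := by
  intro z w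
  obtain ⟨c, hc, hquad⟩ := posdef_quad_bound (Matrix.of fun i j => (B i j).im) hpos
  have hquad' : ∀ x : Fin g → ℝ, c * (∑ j, x j ^ 2) ≤ ∑ i, ∑ j, (B i j).im * x i * x j := by
    intro x
    simpa [Matrix.of_apply] using hquad x
  have hθ : ∀ y : Fin g → ℂ, Summable fun m : Fin g → ℤ => ‖thTerm B y m‖ := by
    intro y
    refine (summable_norm_term B c hc hquad' 1 one_pos y 0).congr fun m => ?_
    unfold thTerm
    norm_num
  have hΘ : ∀ (δ : Fin g → Fin 2) (y : Fin g → ℂ),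
      Summable fun m : Fin g → ℤ => ‖chTerm B δ y m‖ := by
    intro δ y
    refine (summable_norm_term B c hc hquad' 2 two_pos y
      (fun j => ((δ j : ℕ) : ℝ) / 2)).congr fun m => ?_
    unfold chTerm
    push_cast
    norm_num
  have e1 : riemannTheta g B (z + w) * riemannTheta g B (z - w)
      = ∑' p : (Fin g → ℤ) × (Fin g → ℤ), thTerm B (z + w) p.1 * thTerm B (z - w) p.2 :=
    tsum_mul_tsum_of_summable_norm (hθ (z + w)) (hθ (z - w))
  have hsum2 : Summable fun p : (Fin g → ℤ) × (Fin g → ℤ) =>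
      thTerm B (z + w) p.1 * thTerm B (z - w) p.2 :=
    summable_mul_of_summable_norm (hθ (z + w)) (hθ (z - w))
  have hsumE : Summable fun q : (Fin g → Fin 2) × ((Fin g → ℤ) × (Fin g → ℤ)) =>
      thTerm B (z + w) ((pairEquiv g) q).1 * thTerm B (z - w) ((pairEquiv g) q).2 :=
    (pairEquiv g).summable_iff.2 hsum2
  have e2 : (∑' p : (Fin g → ℤ) × (Fin g → ℤ), thTerm B (z + w) p.1 * thTerm B (z - w) p.2)
      = ∑' q : (Fin g → Fin 2) × ((Fin g → ℤ) × (Fin g → ℤ)),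
          thTerm B (z + w) ((pairEquiv g) q).1 * thTerm B (z - w) ((pairEquiv g) q).2 :=
    ((pairEquiv g).tsum_eq _).symm
  have e3 : (∑' q : (Fin g → Fin 2) × ((Fin g → ℤ) × (Fin g → ℤ)),
          thTerm B (z + w) ((pairEquiv g) q).1 * thTerm B (z - w) ((pairEquiv g) q).2)
      = ∑' δ : Fin g → Fin 2, ∑' ab : (Fin g → ℤ) × (Fin g → ℤ),
          thTerm B (z + w) ((pairEquiv g) (δ, ab)).1 * thTerm B (z - w) ((pairEquiv g) (δ, ab)).2 :=
    Summable.tsum_prod hsumE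
  have e4 : ∀ δ : Fin g → Fin 2,
      (∑' ab : (Fin g → ℤ) × (Fin g → ℤ),
          thTerm B (z + w) ((pairEquiv g) (δ, ab)).1 * thTerm B (z - w) ((pairEquiv g) (δ, ab)).2)
      = ∑' ab : (Fin g → ℤ) × (Fin g → ℤ), chTerm B δ z ab.1 * chTerm B δ w ab.2 := by
    intro δ
    refine tsum_congr fun ab => ?_
    exact key_term B z w δ ab.1 ab.2
  have e5 : ∀ δ : Fin g → Fin 2,
      (∑' ab : (Fin g → ℤ) × (Fin g → ℤ), chTerm B δ z ab.1 * chTerm B δ w ab.2)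
      = thetaChar g B δ z * thetaChar g B δ w :=
    fun δ => (tsum_mul_tsum_of_summable_norm (hΘ δ z) (hΘ δ w)).symm
  rw [e1, e2, e3, tsum_fintype]
  exact Finset.sum_congr rfl fun δ _ => (e4 δ).trans (e5 δ)
end
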